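/- arXiv:2405.15371 — 13 statements merged into one kernel-verified Lean document; each statement's English description precedes it below -/
import Mathlib

section
/- Let (W, m, U) be a P||Cmax decision instance with jobs j_1,...,j_n of durations w_1 ≥ ... ≥ w_n, and let A be a partial assignment of jobs j_1,...,j_ℓ to machines with machine loads C_x for x = 1,...,m, all at most U. Suppose all unassigned jobs have equal duration, i.e., w_{ℓ+1} = ... = w_n. Then there exists a completion of A assigning every job to a machine with all machine loads at most U if and only if ∑_{x=1}^m ⌊(U - C_x)/w_n⌋ ≥ n - ℓ. -/
open Finset

lemma aux_complete (m U d : ℕ) (hd : 0 < d) :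
    ∀ (r ℓ : ℕ) (w : ℕ → ℕ) (a : ℕ → Fin m),
      (∀ k, ℓ ≤ k → k < ℓ + r → w k = d) →
      (∀ x : Fin m, (∑ k ∈ Finset.range ℓ, if a k = x then w k else 0) ≤ U) →
      r ≤ (∑ x : Fin m, (U - ∑ k ∈ Finset.range ℓ, if a k = x then w k else 0) / d) →
      ∃ b : ℕ → Fin m, (∀ k, k < ℓ → b k = a k) ∧
        ∀ x : Fin m, (∑ k ∈ Finset.range (ℓ + r), if b k = x then w k else 0) ≤ U := by
  intro r
  induction r with
  | zero =>
    intro ℓ w a _ hfeas _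
    exact ⟨a, fun k _ => rfl, by simpa using hfeas⟩
  | succ r ih =>
    intro ℓ w a hw hfeas hsum
    set C : Fin m → ℕ := fun x => ∑ k ∈ Finset.range ℓ, if a k = x then w k else 0 with hC
    have hsum2 : r + 1 ≤ ∑ x : Fin m, (U - C x) / d := hsum
    have hex : ∃ x₀ : Fin m, 0 < (U - C x₀) / d := by
      by_contra h
      push_neg at h
      have h0 : ∑ x : Fin m, (U - C x) / d = 0 :=
        Finset.sum_eq_zero fun x _ => Nat.le_zero.mp (h x)
      omega
    obtain ⟨x₀, hx₀⟩ := hex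
    have hdle : d ≤ U - C x₀ := (Nat.one_le_div_iff hd).mp hx₀
    have hCU : C x₀ ≤ U := hfeas x₀
    set a' : ℕ → Fin m := Function.update a ℓ x₀ with ha'
    have hC' : ∀ x : Fin m,
        (∑ k ∈ Finset.range (ℓ + 1), if a' k = x then w k else 0)
          = C x + if x₀ = x then d else 0 := by
      intro x
      rw [Finset.sum_range_succ]
      congr 1
      · apply Finset.sum_congr rfl
        intro k hk
        have hkl : k ≠ ℓ := by simp only [Finset.mem_range] at hk; omega
        rw [ha', Function.update_of_ne hkl]
      · rw [ha', Function.update_self, hw ℓ le_rfl (by omega)]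
    have hw' : ∀ k, ℓ + 1 ≤ k → k < ℓ + 1 + r → w k = d := by
      intro k h1 h2; exact hw k (by omega) (by omega)
    have hfeas' : ∀ x : Fin m,
        (∑ k ∈ Finset.range (ℓ + 1), if a' k = x then w k else 0) ≤ U := by
      intro x
      rw [hC' x]
      by_cases hx : x₀ = x
      · subst hx
        rw [if_pos rfl]
        omega
      · rw [if_neg hx, add_zero]
        exact hfeas x
    have hsum' : r ≤ ∑ x : Fin m,
        (U - ∑ k ∈ Finset.range (ℓ + 1), if a' k = x then w k else 0) / d := by
      have e1 : (∑ x : Fin m,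
          (U - ∑ k ∈ Finset.range (ℓ + 1), if a' k = x then w k else 0) / d)
          = ∑ x : Fin m, (U - (C x + if x₀ = x then d else 0)) / d :=
        Finset.sum_congr rfl fun x _ => by rw [hC' x]
      rw [e1, Fintype.sum_eq_add_sum_compl x₀]
      rw [Fintype.sum_eq_add_sum_compl x₀] at hsum2
      have e2 : ∑ x ∈ ({x₀}ᶜ : Finset (Fin m)),
          (U - (C x + if x₀ = x then d else 0)) / d
          = ∑ x ∈ ({x₀}ᶜ : Finset (Fin m)), (U - C x) / d := by
        apply Finset.sum_congr rfl
        intro x hx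
        have hne : x₀ ≠ x := by
          simp only [Finset.mem_compl, Finset.mem_singleton] at hx
          exact fun h => hx h.symm
        rw [if_neg hne, add_zero]
      rw [e2]
      have e3 : (U - (C x₀ + if x₀ = x₀ then d else 0)) / d = (U - C x₀) / d - 1 := by
        rw [if_pos rfl]
        have h4 : (U - C x₀) / d = (U - C x₀ - d) / d + 1 := Nat.div_eq_sub_div hd hdle
        have h5 : U - (C x₀ + d) = U - C x₀ - d := by omega
        rw [h5]
        omega
      rw [e3]
      omega
    obtain ⟨b, hb1, hb2⟩ := ih (ℓ + 1) w a' hw' hfeas' hsum'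
    refine ⟨b, ?_, ?_⟩
    · intro k hk
      rw [hb1 k (by omega), ha', Function.update_of_ne (by omega)]
    · intro x
      have he : ℓ + (r + 1) = ℓ + 1 + r := by omega
      rw [he]
      exact hb2 x

/-- equal-duration base case (Pruning Rule 5).
Jobs are 0-indexed `0,...,n-1`; the partial assignment `a` covers jobs `0,...,ℓ-1`;
all unassigned jobs `ℓ,...,n-1` have the same duration `w (n-1)`. -/
theorem equal_remaining_jobs
    (n ℓ m U : ℕ) (w : ℕ → ℕ) (a : ℕ → Fin m)
    (hn : 0 < n) (hl : ℓ ≤ n) (hm : 0 < m)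
    (hpos : ∀ k, k < n → 0 < w k)
    (hsorted : ∀ i j, i ≤ j → j < n → w j ≤ w i)
    (heq : ∀ k, ℓ ≤ k → k < n → w k = w (n - 1))
    (hfeas : ∀ x : Fin m, (∑ k ∈ Finset.range ℓ, if a k = x then w k else 0) ≤ U) :
    (∃ b : ℕ → Fin m, (∀ k, k < ℓ → b k = a k) ∧
        ∀ x : Fin m, (∑ k ∈ Finset.range n, if b k = x then w k else 0) ≤ U)
      ↔ n - ℓ ≤ ∑ x : Fin m,
          (U - (∑ k ∈ Finset.range ℓ, if a k = x then w k else 0)) / w (n - 1) := by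
  have hd : 0 < w (n - 1) := hpos (n - 1) (by omega)
  constructor
  · rintro ⟨b, hb1, hb2⟩
    set C : Fin m → ℕ := fun x => ∑ k ∈ Finset.range ℓ, if a k = x then w k else 0 with hC
    set c : Fin m → ℕ := fun x => ((Finset.Ico ℓ n).filter (fun k => b k = x)).card with hc
    have hload : ∀ x : Fin m, C x + c x * w (n - 1) ≤ U := by
      intro x
      have hsplit : (∑ k ∈ Finset.range n, if b k = x then w k else 0)
          = (∑ k ∈ Finset.range ℓ, if b k = x then w k else 0)
            + ∑ k ∈ Finset.Ico ℓ n, if b k = x then w k else 0 := by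
        rw [Finset.range_eq_Ico, Finset.range_eq_Ico]
        exact (Finset.sum_Ico_consecutive (f := fun k => if b k = x then w k else 0) (Nat.zero_le ℓ) hl).symm
      have h1 : (∑ k ∈ Finset.range ℓ, if b k = x then w k else 0) = C x := by
        apply Finset.sum_congr rfl
        intro k hk
        rw [hb1 k (Finset.mem_range.mp hk)]
      have h2 : (∑ k ∈ Finset.Ico ℓ n, if b k = x then w k else 0)
          = c x * w (n - 1) := by
        rw [← Finset.sum_filter]
        have hwk : ∀ k ∈ (Finset.Ico ℓ n).filter (fun k => b k = x), w k = w (n - 1) := by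
          intro k hk
          have hk2 := Finset.mem_Ico.mp (Finset.mem_filter.mp hk).1
          exact heq k hk2.1 hk2.2
        rw [Finset.sum_congr rfl hwk, Finset.sum_const, smul_eq_mul]
      have h3 := hb2 x
      rw [hsplit, h1, h2] at h3
      exact h3
    have hcq : ∀ x : Fin m, c x ≤ (U - C x) / w (n - 1) := by
      intro x
      rw [Nat.le_div_iff_mul_le hd]
      have := hload x
      omega
    have hcard : ∑ x : Fin m, c x = n - ℓ := by
      have h := Finset.card_eq_sum_card_fiberwise
        (f := b) (s := Finset.Ico ℓ n) (t := Finset.univ) (fun k _ => Finset.mem_univ (b k))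
      rw [Nat.card_Ico] at h
      exact h.symm
    calc n - ℓ = ∑ x : Fin m, c x := hcard.symm
      _ ≤ _ := Finset.sum_le_sum (fun x _ => hcq x)
  · intro h
    obtain ⟨b, hb1, hb2⟩ := aux_complete m U (w (n - 1)) hd (n - ℓ) ℓ w a
      (fun k h1 h2 => heq k h1 (by omega)) hfeas h
    refine ⟨b, hb1, ?_⟩
    intro x
    have he : ℓ + (n - ℓ) = n := by omega
    rw [he] at hb2
    exact hb2 x
end

section
/- Let (W, m, U) be a P||Cmax decision instance and A a feasible partial assignment of jobs j_1,...,j_ℓ (durations sorted decreasingly). For i = ℓ+1 and a load value u ≤ U, define φ(i, u) = { J' ⊆ {j_i,...,j_n} : u + ∑_{j_k ∈ J'} w_k ≤ U }. Suppose two machines p_x and p_y with loads C_x, C_y satisfy φ(i, C_x) = φ(i, C_y). If there exists a feasible completion of A in which job j_i is assigned to p_x, then there exists a feasible completion of A in which j_i is assigned to p_y. -/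
open Finset

/-- if two machines have equal φ-sets, a feasible completion putting the
next job on `x` can be transformed into one putting it on `y`.
Jobs are 0-indexed `0,...,n-1`; the partial assignment covers jobs `0,...,ℓ-1`,
so the next job is `ℓ` and the unassigned jobs are `Ico ℓ n`. -/
theorem phi_machine_interchange
    (n ℓ m U : ℕ) (w : ℕ → ℕ) (a : ℕ → Fin m)
    (hl : ℓ < n)
    (hsorted : ∀ i j, i ≤ j → j < n → w j ≤ w i)
    (hfeas : ∀ z : Fin m, (∑ k ∈ Finset.range ℓ, if a k = z then w k else 0) ≤ U)
    (x y : Fin m)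
    (hphi : ((Finset.Ico ℓ n).powerset).filter
        (fun J => (∑ k ∈ Finset.range ℓ, if a k = x then w k else 0) + ∑ k ∈ J, w k ≤ U)
      = ((Finset.Ico ℓ n).powerset).filter
        (fun J => (∑ k ∈ Finset.range ℓ, if a k = y then w k else 0) + ∑ k ∈ J, w k ≤ U))
    (hex : ∃ b : ℕ → Fin m, (∀ k, k < ℓ → b k = a k) ∧ b ℓ = x ∧
        ∀ z : Fin m, (∑ k ∈ Finset.range n, if b k = z then w k else 0) ≤ U) :
    ∃ b : ℕ → Fin m, (∀ k, k < ℓ → b k = a k) ∧ b ℓ = y ∧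
        ∀ z : Fin m, (∑ k ∈ Finset.range n, if b k = z then w k else 0) ≤ U := by
  by_cases hxy : x = y
  · subst hxy; exact hex
  obtain ⟨b, hb1, hb2, hb3⟩ := hex
  -- swap assignment on the suffix
  set s : Fin m → Fin m := fun t => if t = x then y else if t = y then x else t with hs
  have hsx : ∀ t, s t = x ↔ t = y := by
    intro t
    simp only [hs]
    split_ifs with h1 h2 <;> simp_all [eq_comm]
  have hsy : ∀ t, s t = y ↔ t = x := by
    intro t
    simp only [hs]
    split_ifs with h1 h2 <;> simp_all [eq_comm]
  have hso : ∀ t z, z ≠ x → z ≠ y → (s t = z ↔ t = z) := by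
    intro t z hzx hzy
    simp only [hs]
    split_ifs with h1 h2 <;> simp_all [eq_comm]
  refine ⟨fun k => if k < ℓ then a k else s (b k), fun k hk => by simp [hk], ?_, ?_⟩
  · simp [hb2, hsy x]
  intro z
  have hsplit : ∀ (c : ℕ → Fin m) (v : Fin m), (∑ k ∈ Finset.range n, if c k = v then w k else 0)
      = (∑ k ∈ Finset.range ℓ, if c k = v then w k else 0)
        + ∑ k ∈ Finset.Ico ℓ n, if c k = v then w k else 0 := by
    intro c v
    exact (Finset.sum_range_add_sum_Ico _ hl.le).symm
  rw [hsplit]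
  have hpre : (∑ k ∈ Finset.range ℓ, if (if k < ℓ then a k else s (b k)) = z then w k else 0)
      = ∑ k ∈ Finset.range ℓ, if a k = z then w k else 0 := by
    refine Finset.sum_congr rfl fun k hk => ?_
    rw [Finset.mem_range] at hk
    simp [hk]
  have hpreb : ∀ v : Fin m, (∑ k ∈ Finset.range ℓ, if b k = v then w k else 0)
      = ∑ k ∈ Finset.range ℓ, if a k = v then w k else 0 := by
    intro v
    refine Finset.sum_congr rfl fun k hk => ?_
    rw [Finset.mem_range] at hk
    rw [hb1 k hk]
  rw [hpre]
  have hsuf : ∀ v : Fin m, (∑ k ∈ Finset.Ico ℓ n, if (if k < ℓ then a k else s (b k)) = v then w k else 0)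
      = ∑ k ∈ Finset.Ico ℓ n, if s (b k) = v then w k else 0 := by
    intro v
    refine Finset.sum_congr rfl fun k hk => ?_
    rw [Finset.mem_Ico] at hk
    simp [Nat.not_lt.mpr hk.1]
  rw [hsuf]
  -- membership facts in φ-sets
  have hmem : ∀ v : Fin m, ((Finset.Ico ℓ n).filter (fun k => b k = v)) ∈
      ((Finset.Ico ℓ n).powerset).filter
        (fun J => (∑ k ∈ Finset.range ℓ, if a k = v then w k else 0) + ∑ k ∈ J, w k ≤ U) := by
    intro v
    rw [Finset.mem_filter, Finset.mem_powerset]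
    refine ⟨Finset.filter_subset _ _, ?_⟩
    have := hb3 v
    rw [hsplit b v, hpreb v] at this
    calc (∑ k ∈ Finset.range ℓ, if a k = v then w k else 0)
          + ∑ k ∈ (Finset.Ico ℓ n).filter (fun k => b k = v), w k
        = (∑ k ∈ Finset.range ℓ, if a k = v then w k else 0)
          + ∑ k ∈ Finset.Ico ℓ n, if b k = v then w k else 0 := by
          rw [Finset.sum_filter]
      _ ≤ U := this
  by_cases hzx : z = x
  · subst hzx
    have h1 : (∑ k ∈ Finset.Ico ℓ n, if s (b k) = z then w k else 0)
        = ∑ k ∈ (Finset.Ico ℓ n).filter (fun k => b k = y), w k := by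
      rw [Finset.sum_filter]
      exact Finset.sum_congr rfl fun k _ => by simp only [hsx (b k)]
    rw [h1]
    have := hmem y
    rw [← hphi, Finset.mem_filter] at this
    exact this.2
  by_cases hzy : z = y
  · subst hzy
    have h1 : (∑ k ∈ Finset.Ico ℓ n, if s (b k) = z then w k else 0)
        = ∑ k ∈ (Finset.Ico ℓ n).filter (fun k => b k = x), w k := by
      rw [Finset.sum_filter]
      exact Finset.sum_congr rfl fun k _ => by simp only [hsy (b k)]
    rw [h1]
    have := hmem x
    rw [hphi, Finset.mem_filter] at this
    exact this.2
  · have h1 : (∑ k ∈ Finset.Ico ℓ n, if s (b k) = z then w k else 0)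
        = ∑ k ∈ Finset.Ico ℓ n, if b k = z then w k else 0 := by
      exact Finset.sum_congr rfl fun k _ => by simp only [hso (b k) z hzx hzy]
    rw [h1]
    have := hb3 z
    rw [hsplit b z, hpreb z] at this
    exact this
end

section
/- (Fill-Up Rule) Let (W, m, U) be a P||Cmax decision instance with durations w_1 ≥ ... ≥ w_n, A a feasible partial assignment of jobs j_1,...,j_ℓ, and i = ℓ+1. Suppose machine p_x satisfies C_x + w_i ≤ U and φ(i, C_x) = φ(i, U - w_i), where φ(i, u) = { J' ⊆ {j_i,...,j_n} : u + ∑_{j_k∈J'} w_k ≤ U }. If there exists any feasible completion of A, then there exists a feasible completion of A in which job j_i is assigned to machine p_x. -/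
open Finset

/-- the Fill-Up Rule (FUR).
Jobs are 0-indexed `0,...,n-1`; the partial assignment covers jobs `0,...,ℓ-1`,
so the next (largest unassigned) job is `ℓ` and the unassigned jobs are `Ico ℓ n`. -/
theorem fill_up_rule
    (n ℓ m U : ℕ) (w : ℕ → ℕ) (a : ℕ → Fin m)
    (hl : ℓ < n)
    (hsorted : ∀ i j, i ≤ j → j < n → w j ≤ w i)
    (hfeas : ∀ z : Fin m, (∑ k ∈ Finset.range ℓ, if a k = z then w k else 0) ≤ U)
    (x : Fin m)
    (hfit : (∑ k ∈ Finset.range ℓ, if a k = x then w k else 0) + w ℓ ≤ U)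
    (hphi : ((Finset.Ico ℓ n).powerset).filter
        (fun J => (∑ k ∈ Finset.range ℓ, if a k = x then w k else 0) + ∑ k ∈ J, w k ≤ U)
      = ((Finset.Ico ℓ n).powerset).filter
        (fun J => (U - w ℓ) + ∑ k ∈ J, w k ≤ U))
    (hex : ∃ b : ℕ → Fin m, (∀ k, k < ℓ → b k = a k) ∧
        ∀ z : Fin m, (∑ k ∈ Finset.range n, if b k = z then w k else 0) ≤ U) :
    ∃ b : ℕ → Fin m, (∀ k, k < ℓ → b k = a k) ∧ b ℓ = x ∧
        ∀ z : Fin m, (∑ k ∈ Finset.range n, if b k = z then w k else 0) ≤ U := by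
  obtain ⟨b, hb1, hb2⟩ := hex
  by_cases hxy : b ℓ = x
  · exact ⟨b, hb1, hxy, hb2⟩
  have hxy' : ¬ x = b ℓ := fun h => hxy h.symm
  have hwU : w ℓ ≤ U := le_trans (Nat.le_add_left _ _) hfit
  have hsplit : ∀ (c : ℕ → Fin m) (z : Fin m),
      (∑ k ∈ Finset.range n, if c k = z then w k else 0)
      = (∑ k ∈ Finset.range ℓ, if c k = z then w k else 0)
        + (∑ k ∈ Finset.Ico ℓ n, if c k = z then w k else 0) := by
    intro c z
    exact (Finset.sum_range_add_sum_Ico _ hl.le).symm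
  have hrange : ∀ z : Fin m,
      (∑ k ∈ Finset.range ℓ, if b k = z then w k else 0)
      = (∑ k ∈ Finset.range ℓ, if a k = z then w k else 0) :=
    fun z => Finset.sum_congr rfl fun k hk => by rw [hb1 k (Finset.mem_range.mp hk)]
  have hCx : (∑ k ∈ Finset.range ℓ, if a k = x then w k else 0)
      + (∑ k ∈ Finset.Ico ℓ n, if b k = x then w k else 0) ≤ U := by
    have := hb2 x
    rw [hsplit b x, hrange x] at this
    exact this
  have hkey : (∑ k ∈ Finset.Ico ℓ n, if b k = x then w k else 0) ≤ w ℓ := by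
    have hsum : (∑ k ∈ (Finset.Ico ℓ n).filter (fun k => b k = x), w k)
        = ∑ k ∈ Finset.Ico ℓ n, if b k = x then w k else 0 :=
      (Finset.sum_filter _ _)
    have hmem : (Finset.Ico ℓ n).filter (fun k => b k = x)
        ∈ ((Finset.Ico ℓ n).powerset).filter
          (fun J => (∑ k ∈ Finset.range ℓ, if a k = x then w k else 0) + ∑ k ∈ J, w k ≤ U) := by
      refine Finset.mem_filter.mpr ⟨Finset.mem_powerset.mpr (Finset.filter_subset _ _), ?_⟩
      rw [hsum]; exact hCx
    rw [hphi] at hmem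
    have h2 := (Finset.mem_filter.mp hmem).2
    rw [hsum] at h2
    omega
  have hwl : w ℓ = ∑ k ∈ Finset.Ico ℓ n, if k = ℓ then w k else 0 := by
    rw [Finset.sum_ite_eq' (Finset.Ico ℓ n) ℓ w,
      if_pos (Finset.mem_Ico.mpr ⟨le_refl ℓ, hl⟩)]
  -- the modified assignment
  set b' : ℕ → Fin m :=
    fun k => if k < ℓ then a k else if k = ℓ then x else if b k = x then b ℓ else b k with hb'
  have hb'lt : ∀ k, k < ℓ → b' k = a k := fun k hk => if_pos hk
  have hb'ℓ : b' ℓ = x := by simp [hb']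
  have hIx : (∑ k ∈ Finset.Ico ℓ n, if b' k = x then w k else 0) = w ℓ := by
    rw [hwl]
    refine Finset.sum_congr rfl fun k hk => ?_
    have hk1 : ℓ ≤ k := (Finset.mem_Ico.mp hk).1
    simp only [hb', if_neg (not_lt.mpr hk1)]
    by_cases hkl : k = ℓ
    · rw [if_pos hkl, if_pos rfl, if_pos hkl]
    · rw [if_neg hkl, if_neg hkl]
      by_cases hbk : b k = x
      · rw [if_pos hbk, if_neg hxy]
      · rw [if_neg hbk, if_neg hbk]
  have hIy : (∑ k ∈ Finset.Ico ℓ n, if b' k = b ℓ then w k else 0) + w ℓ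
      = (∑ k ∈ Finset.Ico ℓ n, if b k = x then w k else 0)
        + (∑ k ∈ Finset.Ico ℓ n, if b k = b ℓ then w k else 0) := by
    rw [hwl, ← Finset.sum_add_distrib, ← Finset.sum_add_distrib]
    refine Finset.sum_congr rfl fun k hk => ?_
    have hk1 : ℓ ≤ k := (Finset.mem_Ico.mp hk).1
    simp only [hb', if_neg (not_lt.mpr hk1)]
    by_cases hkl : k = ℓ
    · rw [if_pos hkl, if_pos hkl, hkl, if_neg hxy', if_neg hxy, if_pos rfl]
    · rw [if_neg hkl, if_neg hkl]
      by_cases hbk : b k = x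
      · rw [if_pos hbk, if_pos rfl, if_pos hbk,
          if_neg (show ¬ b k = b ℓ from fun h => hxy (by rw [← h]; exact hbk))]
      · rw [if_neg hbk, if_neg hbk]
        omega
  have hIz : ∀ z : Fin m, ¬ z = x → ¬ z = b ℓ →
      (∑ k ∈ Finset.Ico ℓ n, if b' k = z then w k else 0)
      = ∑ k ∈ Finset.Ico ℓ n, if b k = z then w k else 0 := by
    intro z hzx hzy
    refine Finset.sum_congr rfl fun k hk => ?_
    have hk1 : ℓ ≤ k := (Finset.mem_Ico.mp hk).1
    simp only [hb', if_neg (not_lt.mpr hk1)]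
    by_cases hkl : k = ℓ
    · rw [if_pos hkl, if_neg (fun h : x = z => hzx h.symm), hkl,
        if_neg (fun h : b ℓ = z => hzy h.symm)]
    · rw [if_neg hkl]
      by_cases hbk : b k = x
      · rw [if_pos hbk, if_neg (fun h : b ℓ = z => hzy h.symm), hbk,
          if_neg (fun h : x = z => hzx h.symm)]
      · rw [if_neg hbk]
  refine ⟨b', hb'lt, hb'ℓ, ?_⟩
  intro z
  rw [hsplit b' z]
  have hr : (∑ k ∈ Finset.range ℓ, if b' k = z then w k else 0)
      = ∑ k ∈ Finset.range ℓ, if a k = z then w k else 0 :=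
    Finset.sum_congr rfl fun k hk => by rw [hb'lt k (Finset.mem_range.mp hk)]
  rw [hr]
  by_cases hzx : z = x
  · rw [hzx, hIx]
    exact hfit
  · by_cases hzy : z = b ℓ
    · rw [hzy]
      have h1 := hb2 (b ℓ)
      rw [hsplit b (b ℓ), hrange (b ℓ)] at h1
      omega
    · rw [hIz z hzx hzy]
      have h1 := hb2 z
      rw [hsplit b z, hrange z] at h1
      exact h1
end

section
/- Let (W, m, U) be a P||Cmax decision instance with durations w_1 ≥ ... ≥ w_n. If ∑_{i=1}^{n-1} w_i < m(U - w_n + 1), then (W, m, U) has a feasible assignment (all machine loads at most U) if and only if the instance (W \ {w_n}, m, U) obtained by removing the smallest job has a feasible assignment. -/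
open Finset

/-- removing the smallest job (Theorem 3.2).
Jobs are 0-indexed `0,...,n-1`, sorted decreasingly; the smallest job is `n-1`. -/
theorem remove_smallest_job
    (n m U : ℕ) (w : ℕ → ℕ)
    (hn : 0 < n) (hm : 0 < m)
    (hpos : ∀ k, k < n → 0 < w k)
    (hsorted : ∀ i j, i ≤ j → j < n → w j ≤ w i)
    (hU : w 0 ≤ U)
    (hcond : ∑ i ∈ Finset.range (n - 1), w i < m * (U - w (n - 1) + 1)) :
    (∃ a : ℕ → Fin m,
        ∀ x : Fin m, (∑ k ∈ Finset.range n, if a k = x then w k else 0) ≤ U)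
  ↔ (∃ a : ℕ → Fin m,
        ∀ x : Fin m, (∑ k ∈ Finset.range (n - 1), if a k = x then w k else 0) ≤ U) := by
  obtain ⟨n', rfl⟩ : ∃ n', n = n' + 1 := ⟨n - 1, (Nat.succ_pred_eq_of_pos hn).symm⟩
  simp only [Nat.add_sub_cancel] at *
  constructor
  · rintro ⟨a, ha⟩
    refine ⟨a, fun x => le_trans ?_ (ha x)⟩
    exact Finset.sum_le_sum_of_subset (Finset.range_subset_range.mpr (Nat.le_succ n'))
  · rintro ⟨a, ha⟩
    -- pigeonhole: some machine has load ≤ U - w n'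
    have hw : w n' ≤ U := le_trans (hsorted 0 n' (Nat.zero_le _) (Nat.lt_succ_self _)) hU
    have htot : ∑ x : Fin m, (∑ k ∈ Finset.range n', if a k = x then w k else 0)
        = ∑ i ∈ Finset.range n', w i := by
      rw [Finset.sum_comm]
      refine Finset.sum_congr rfl fun k _ => ?_
      simp [Finset.sum_ite_eq]
    have hx : ∃ x : Fin m, (∑ k ∈ Finset.range n', if a k = x then w k else 0) ≤ U - w n' := by
      by_contra h
      push_neg at h
      have : m * (U - w n' + 1) ≤ ∑ x : Fin m, (∑ k ∈ Finset.range n', if a k = x then w k else 0) := by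
        calc m * (U - w n' + 1) = ∑ _x : Fin m, (U - w n' + 1) := by
              simp [Finset.sum_const, Finset.card_univ, mul_comm]
          _ ≤ _ := Finset.sum_le_sum fun x _ => h x
      omega
    obtain ⟨x, hx⟩ := hx
    refine ⟨fun k => if k = n' then x else a k, fun y => ?_⟩
    rw [Finset.sum_range_succ]
    have hrest : ∀ y : Fin m, (∑ k ∈ Finset.range n',
        if (if k = n' then x else a k) = y then w k else 0)
        = ∑ k ∈ Finset.range n', if a k = y then w k else 0 := by
      intro y
      refine Finset.sum_congr rfl fun k hk => ?_
      have : k ≠ n' := Nat.ne_of_lt (Finset.mem_range.mp hk)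
      simp [this]
    rw [hrest]
    by_cases hy : y = x
    · subst hy
      simp only [if_pos rfl, ite_true, if_pos rfl]
      omega
    · have : x ≠ y := fun h => hy h.symm
      simp only [if_pos rfl, ite_true, if_neg this, add_zero]
      exact ha y
end

section
/- Define the range equivalency table RET by: RET[n][u] = 1 if U - w_n < u ≤ U and RET[n][u] = 2 if 0 ≤ u ≤ U - w_n; and for i < n, RET[i][U] = 1, and for u from U-1 down to 0, RET[i][u] = RET[i][u+1] if left(i,u)=left(i,u+1) and right(i,u)=right(i,u+1), and RET[i][u] = RET[i][u+1]+1 otherwise, where left(i,u) = RET[i+1][u] and right(i,u) = RET[i+1][u+w_i] (with right(i,u) = 0 if u + w_i > U). Then for any i ∈ {1,...,n} and u, u' < U: RET[i][u] = RET[i][u'] if and only if φ(i, u) = φ(i, u'). -/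
open Finset

/-- Downward recursion computing a RET row from the previous row's
`left`/`right` lookup functions: `retRowAux lf rt U t = RET[i][U - t]`. -/
def retRowAux (lf rt : ℕ → ℕ) (U : ℕ) : ℕ → ℕ
  | 0 => 1
  | t + 1 =>
      if lf (U - (t + 1)) = lf (U - t) ∧ rt (U - (t + 1)) = rt (U - t) then
        retRowAux lf rt U t
      else
        retRowAux lf rt U t + 1

/-- The RET row for job `i`, given the previous row (for job `i+1`) and duration `wi`. -/
def retNextRow (prev : ℕ → ℕ) (wi U : ℕ) (u : ℕ) : ℕ :=
  retRowAux prev (fun v => if U < v + wi then 0 else prev (v + wi)) U (U - u)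

/-- `retRowOfDepth w U n d` is the RET row of job `n - d` (1-indexed jobs `1,...,n`).
For `d = 0` (job `n`): value `2` on `0 ≤ u ≤ U - w n` and `1` on `U - w n < u ≤ U`. -/
def retRowOfDepth (w : ℕ → ℕ) (U n : ℕ) : ℕ → ℕ → ℕ
  | 0 => fun u => if u ≤ U - w n then 2 else 1
  | d + 1 => retNextRow (retRowOfDepth w U n d) (w (n - (d + 1))) U

/-- The range equivalency table: `RET w U n i u = RET[i][u]`. -/
def RET (w : ℕ → ℕ) (U n i u : ℕ) : ℕ :=
  retRowOfDepth w U n (n - i) u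

/-! ### Auxiliary definitions and lemmas -/

/-- The family φ(i,u). -/
def phiSet (w : ℕ → ℕ) (U n i u : ℕ) : Finset (Finset ℕ) :=
  ((Finset.Icc i n).powerset).filter (fun J => u + ∑ k ∈ J, w k ≤ U)

/-- `s` is a sum of durations of a subset of jobs `i,...,n`. -/
def Reach (w : ℕ → ℕ) (n i s : ℕ) : Prop :=
  ∃ J ⊆ Finset.Icc i n, ∑ k ∈ J, w k = s

lemma retRowAux_pos (lf rt : ℕ → ℕ) (U t : ℕ) : 1 ≤ retRowAux lf rt U t := by
  induction t with
  | zero => simp [retRowAux]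
  | succ m ih => rw [retRowAux]; split <;> omega

lemma retRowOfDepth_pos (w : ℕ → ℕ) (U n d u : ℕ) :
    1 ≤ retRowOfDepth w U n d u := by
  cases d with
  | zero => simp only [retRowOfDepth]; split <;> omega
  | succ m =>
      simp only [retRowOfDepth, retNextRow]
      exact retRowAux_pos _ _ _ _

lemma retNextRow_succ (prev : ℕ → ℕ) (wi U u : ℕ) (h : u < U) :
    retNextRow prev wi U u =
      if prev u = prev (u+1) ∧
          (if U < u + wi then 0 else prev (u + wi)) =
          (if U < (u+1) + wi then 0 else prev ((u+1) + wi)) then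
        retNextRow prev wi U (u+1)
      else retNextRow prev wi U (u+1) + 1 := by
  unfold retNextRow
  obtain ⟨t, ht⟩ : ∃ t, U - u = t + 1 := ⟨U - u - 1, by omega⟩
  have h1 : U - (u+1) = t := by omega
  have h2 : U - (t+1) = u := by omega
  have h3 : U - t = u + 1 := by omega
  rw [ht, h1, retRowAux, h2, h3]

/-- Generic "constancy on an interval" lemma for antitone step functions. -/
lemma chain_eq {α : Type*} [PartialOrder α] (g : ℕ → α) (U u u' : ℕ)
    (huu : u ≤ u') (hu' : u' ≤ U) (hstep : ∀ v, v < U → g (v+1) ≤ g v) :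
    g u = g u' ↔ ∀ v, u ≤ v → v < u' → g v = g (v+1) := by
  have mono : ∀ b, b ≤ U → ∀ a, a ≤ b → g b ≤ g a := by
    intro b
    induction b with
    | zero =>
        intro _ a ha
        have : a = 0 := by omega
        rw [this]
    | succ m ih =>
        intro hmU a ha
        by_cases h : a = m + 1
        · subst h; exact le_rfl
        · exact (hstep m (by omega)).trans (ih (by omega) a (by omega))
  constructor
  · intro h v hv hv'
    have h1 : g u' ≤ g (v+1) := mono _ hu' _ (by omega)
    have h2 : g (v+1) ≤ g v := hstep v (by omega)
    have h3 : g v ≤ g u := mono _ (by omega) _ hv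
    rw [h] at h3
    exact le_antisymm (h3.trans h1) h2
  · intro h
    have key : ∀ b, b ≤ u' → u ≤ b → g u = g b := by
      intro b
      induction b with
      | zero =>
          intro _ hb
          have : u = 0 := by omega
          rw [this]
      | succ m ih =>
          intro hb hub
          by_cases hu : u = m + 1
          · rw [hu]
          · rw [ih (by omega) (by omega), h m (by omega) (by omega)]
    exact key u' le_rfl huu

lemma phi_anti (w : ℕ → ℕ) (U n i v : ℕ) :
    phiSet w U n i (v+1) ≤ phiSet w U n i v := by
  intro J hJ
  simp only [phiSet, mem_filter, mem_powerset] at hJ ⊢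
  exact ⟨hJ.1, by omega⟩

lemma phi_step (w : ℕ → ℕ) (U n i v : ℕ) (hv : v < U) :
    phiSet w U n i v = phiSet w U n i (v+1) ↔ ¬ Reach w n i (U - v) := by
  constructor
  · rintro h ⟨J, hJ, hs⟩
    have h1 : J ∈ phiSet w U n i v := by
      simp only [phiSet, mem_filter, mem_powerset]
      exact ⟨hJ, by omega⟩
    rw [h] at h1
    simp only [phiSet, mem_filter, mem_powerset] at h1
    omega
  · intro h
    unfold phiSet
    ext J
    simp only [mem_filter, mem_powerset]
    refine and_congr_right fun hJ => ⟨fun hle => ?_, fun hle => by omega⟩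
    by_contra hle'
    exact h ⟨J, hJ, by omega⟩

lemma reach_succ (w : ℕ → ℕ) (n i s : ℕ) (hi : i < n) :
    Reach w n i s ↔ Reach w n (i+1) s ∨ (w i ≤ s ∧ Reach w n (i+1) (s - w i)) := by
  constructor
  · rintro ⟨J, hJ, hs⟩
    by_cases hiJ : i ∈ J
    · right
      have hsum : ∑ x ∈ J.erase i, w x + w i = ∑ x ∈ J, w x :=
        Finset.sum_erase_add J w hiJ
      refine ⟨by omega, J.erase i, ?_, by omega⟩
      intro k hk
      have hk1 := Finset.mem_of_mem_erase hk
      have hk2 := Finset.ne_of_mem_erase hk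
      have := hJ hk1
      simp only [mem_Icc] at this ⊢
      omega
    · left
      refine ⟨J, ?_, hs⟩
      intro k hk
      have := hJ hk
      have hne : k ≠ i := fun he => hiJ (he ▸ hk)
      simp only [mem_Icc] at this ⊢
      omega
  · rintro (⟨J, hJ, hs⟩ | ⟨hw, J, hJ, hs⟩)
    · exact ⟨J, hJ.trans (Finset.Icc_subset_Icc_left (by omega)), hs⟩
    · have hiJ : i ∉ J := by
        intro hmem
        have := hJ hmem
        simp only [mem_Icc] at this
        omega
      refine ⟨insert i J, ?_, ?_⟩
      · rw [Finset.insert_subset_iff]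
        refine ⟨?_, hJ.trans (Finset.Icc_subset_Icc_left (by omega))⟩
        simp only [mem_Icc]
        omega
      · rw [Finset.sum_insert hiJ, hs]; omega

lemma main_aux (n U : ℕ) (w : ℕ → ℕ) (hU1 : w n ≤ U) :
    ∀ d, d < n → ∀ u u', u ≤ u' → u' ≤ U →
      (retRowOfDepth w U n d u = retRowOfDepth w U n d u' ↔
        phiSet w U n (n - d) u = phiSet w U n (n - d) u') := by
  intro d
  induction d with
  | zero =>
    intro _ u u' huu hu'
    simp only [retRowOfDepth, Nat.sub_zero]
    have hL : ((if u ≤ U - w n then 2 else 1) = (if u' ≤ U - w n then (2:ℕ) else 1)) ↔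
        (u ≤ U - w n ↔ u' ≤ U - w n) := by
      by_cases h1 : u ≤ U - w n <;> by_cases h2 : u' ≤ U - w n <;> simp [h1, h2]
    rw [hL]
    have hmem : ∀ v, ({n} : Finset ℕ) ∈ phiSet w U n n v ↔ v + w n ≤ U := by
      intro v
      simp [phiSet, mem_filter, mem_powerset, Finset.Icc_self]
    constructor
    · intro hc
      unfold phiSet
      ext J
      simp only [mem_filter, mem_powerset]
      refine and_congr_right fun hJ => ?_
      rw [Finset.Icc_self] at hJ
      rcases Finset.subset_singleton_iff.mp hJ with rfl | rfl
      · rw [Finset.sum_empty]; omega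
      · rw [Finset.sum_singleton]
        constructor <;> intro h
        · have h1 : u ≤ U - w n := by omega
          have := hc.mp h1; omega
        · have h1 : u' ≤ U - w n := by omega
          have := hc.mpr h1; omega
    · intro hphi
      have e1 : (u ≤ U - w n) ↔ u + w n ≤ U := by omega
      have e2 : (u' ≤ U - w n) ↔ u' + w n ≤ U := by omega
      rw [e1, e2, ← hmem u, ← hmem u', hphi]
  | succ d ih =>
    intro hd u u' huu hu'
    set i := n - (d + 1) with hi_def
    have hi1 : 1 ≤ i := by omega
    have hin : i < n := by omega
    have hnd : n - d = i + 1 := by omega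
    have hstep_iff : ∀ v, v < U →
        (retRowOfDepth w U n (d+1) v = retRowOfDepth w U n (d+1) (v+1) ↔
          phiSet w U n i v = phiSet w U n i (v+1)) := by
      intro v hv
      have hrec := retNextRow_succ (retRowOfDepth w U n d) (w i) U v hv
      have hrow : retRowOfDepth w U n (d+1) v = retRowOfDepth w U n (d+1) (v+1) ↔
          (retRowOfDepth w U n d v = retRowOfDepth w U n d (v+1) ∧
           (if U < v + w i then 0 else retRowOfDepth w U n d (v + w i)) =
           (if U < (v+1) + w i then 0 else retRowOfDepth w U n d ((v+1) + w i))) := by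
        simp only [retRowOfDepth, ← hi_def]
        rw [hrec]
        by_cases hc : (retRowOfDepth w U n d v = retRowOfDepth w U n d (v+1) ∧
           (if U < v + w i then 0 else retRowOfDepth w U n d (v + w i)) =
           (if U < (v+1) + w i then 0 else retRowOfDepth w U n d ((v+1) + w i)))
        · rw [if_pos hc]; simp [hc]
        · rw [if_neg hc]
          constructor
          · intro h; omega
          · intro h; exact absurd h hc
      have hL : retRowOfDepth w U n d v = retRowOfDepth w U n d (v+1) ↔
          ¬ Reach w n (i+1) (U - v) := by
        have hih := ih (by omega) v (v+1) (by omega) (by omega)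
        rw [hnd] at hih
        rw [hih]
        exact phi_step w U n (i+1) v hv
      have hR : ((if U < v + w i then 0 else retRowOfDepth w U n d (v + w i)) =
           (if U < (v+1) + w i then 0 else retRowOfDepth w U n d ((v+1) + w i))) ↔
          ¬ (w i ≤ U - v ∧ Reach w n (i+1) (U - v - w i)) := by
        rcases lt_trichotomy (v + w i) U with hcase | hcase | hcase
        · rw [if_neg (by omega), if_neg (by omega)]
          have e : (v+1) + w i = (v + w i) + 1 := by omega
          rw [e]
          have hih := ih (by omega) (v + w i) (v + w i + 1) (by omega) (by omega)
          rw [hnd] at hih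
          rw [hih, phi_step w U n (i+1) (v + w i) (by omega)]
          have e2 : U - (v + w i) = U - v - w i := by omega
          rw [e2]
          constructor
          · rintro h ⟨_, hr⟩; exact h hr
          · intro h hr; exact h ⟨by omega, hr⟩
        · rw [if_neg (by omega), if_pos (by omega)]
          have hpos1 := retRowOfDepth_pos w U n d (v + w i)
          constructor
          · intro h; omega
          · intro h
            exfalso
            refine h ⟨by omega, ∅, Finset.empty_subset _, ?_⟩
            rw [Finset.sum_empty]; omega
        · rw [if_pos (by omega), if_pos (by omega)]
          constructor
          · rintro _ ⟨hw, _⟩; omega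
          · intro _; rfl
      rw [hrow, hL, hR, phi_step w U n i v hv, reach_succ w n i (U - v) hin]
      tauto
    have hstepmono : ∀ v, v < U →
        retRowOfDepth w U n (d+1) (v+1) ≤ retRowOfDepth w U n (d+1) v := by
      intro v hv
      have hrec := retNextRow_succ (retRowOfDepth w U n d) (w i) U v hv
      simp only [retRowOfDepth, ← hi_def]
      rw [hrec]
      split_ifs <;> omega
    rw [chain_eq (retRowOfDepth w U n (d+1)) U u u' huu hu' hstepmono,
        chain_eq (phiSet w U n i) U u u' huu hu'
          (fun v _ => phi_anti w U n i v)]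
    exact forall_congr' fun v =>
      imp_congr_right fun _ => imp_congr_right fun hv2 => hstep_iff v (by omega)

/-- RET cells agree iff the corresponding φ sets agree.
Jobs are 1-indexed `1,...,n`; φ(i,u) is the family of subsets of `Icc i n`
of total duration at most `U - u`. -/
theorem ret_iff_phi
    (n U : ℕ) (w : ℕ → ℕ) (hn : 0 < n)
    (hpos : ∀ k, 1 ≤ k → k ≤ n → 0 < w k)
    (hsorted : ∀ i j, i ≤ j → j ≤ n → w j ≤ w i)
    (hU : w 1 ≤ U)
    (i u u' : ℕ) (hi1 : 1 ≤ i) (hin : i ≤ n) (hu : u < U) (hu' : u' < U) :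
    RET w U n i u = RET w U n i u'
      ↔ ((Finset.Icc i n).powerset).filter (fun J => u + ∑ k ∈ J, w k ≤ U)
          = ((Finset.Icc i n).powerset).filter (fun J => u' + ∑ k ∈ J, w k ≤ U) := by
  have hU1 : w n ≤ U := le_trans (hsorted 1 n (by omega) le_rfl) hU
  have key := main_aux n U w hU1
  have hd : n - i < n := by omega
  have hni : n - (n - i) = i := by omega
  rcases le_total u u' with h | h
  · have this := key (n - i) hd u u' h (by omega)
    rw [hni] at this
    exact this
  · have this := key (n - i) hd u' u h (by omega)
    rw [hni] at this
    constructor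
    · intro he; exact ((this.mp he.symm)).symm
    · intro he; exact ((this.mpr he.symm)).symm
end

section
/- Let A and B be two partial assignments of the same set of jobs j_1,...,j_ℓ of a P||Cmax instance (W, m) to m machines, with identical silhouettes, i.e., the multisets {C_1^A,...,C_m^A} and {C_1^B,...,C_m^B} of machine loads are equal. Then for any bound U, A admits a feasible completion with all machine loads at most U if and only if B does. -/
open Finset

private lemma exists_equiv_of_map_eq {m : ℕ} (f g : Fin m → ℕ)
    (h : Multiset.map f (Finset.univ.val) = Multiset.map g (Finset.univ.val)) :
    ∃ σ : Fin m ≃ Fin m, ∀ x, g (σ x) = f x := by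
  have hc : ∀ v : ℕ, Fintype.card {x : Fin m // f x = v} = Fintype.card {x : Fin m // g x = v} := by
    intro v
    have := congrArg (Multiset.count v) h
    simp only [Multiset.count_map] at this
    rw [Fintype.card_subtype, Fintype.card_subtype]
    simpa [Finset.card, Finset.filter, eq_comm] using this
  exact ⟨Equiv.ofFiberEquiv (fun v => Fintype.equivOfCardEq (hc v)),
    fun x => Equiv.ofFiberEquiv_map _ x⟩

private lemma silhouette_mp
    (n ℓ m : ℕ) (w : ℕ → ℕ) (a b : ℕ → Fin m) (hl : ℓ ≤ n)
    (hsil :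
      Multiset.map (fun x : Fin m => ∑ k ∈ Finset.range ℓ, if a k = x then w k else 0)
          (Finset.univ.val)
        = Multiset.map (fun x : Fin m => ∑ k ∈ Finset.range ℓ, if b k = x then w k else 0)
          (Finset.univ.val))
    (U : ℕ)
    (h : ∃ c : ℕ → Fin m, (∀ k, k < ℓ → c k = a k) ∧
        ∀ x : Fin m, (∑ k ∈ Finset.range n, if c k = x then w k else 0) ≤ U) :
    (∃ c : ℕ → Fin m, (∀ k, k < ℓ → c k = b k) ∧
        ∀ x : Fin m, (∑ k ∈ Finset.range n, if c k = x then w k else 0) ≤ U) := by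
  obtain ⟨σ, hσ⟩ := exists_equiv_of_map_eq _ _ hsil
  obtain ⟨c, hca, hc⟩ := h
  refine ⟨fun k => if k < ℓ then b k else σ (c k), fun k hk => by simp [hk], fun x => ?_⟩
  have hsplit : ∀ (d : ℕ → Fin m) (y : Fin m),
      (∑ k ∈ Finset.range n, if d k = y then w k else 0)
        = (∑ k ∈ Finset.range ℓ, if d k = y then w k else 0)
          + ∑ k ∈ Finset.Ico ℓ n, if d k = y then w k else 0 := by
    intro d y
    rw [Finset.range_eq_Ico, ← Finset.sum_Ico_consecutive _ (Nat.zero_le ℓ) hl,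
      ← Finset.range_eq_Ico]
  rw [hsplit]
  have h1 : (∑ k ∈ Finset.range ℓ, if (if k < ℓ then b k else σ (c k)) = x then w k else 0)
      = ∑ k ∈ Finset.range ℓ, if b k = x then w k else 0 := by
    apply Finset.sum_congr rfl
    intro k hk
    simp [Finset.mem_range.mp hk]
  have h2 : (∑ k ∈ Finset.Ico ℓ n, if (if k < ℓ then b k else σ (c k)) = x then w k else 0)
      = ∑ k ∈ Finset.Ico ℓ n, if c k = σ.symm x then w k else 0 := by
    apply Finset.sum_congr rfl
    intro k hk
    have hk' : ¬ k < ℓ := Nat.not_lt.mpr (Finset.mem_Ico.mp hk).1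
    simp only [hk', if_false]
    congr 1
    simp [Equiv.eq_symm_apply, eq_comm]
  rw [h1, h2]
  have hB : (∑ k ∈ Finset.range ℓ, if b k = x then w k else 0)
      = ∑ k ∈ Finset.range ℓ, if c k = σ.symm x then w k else 0 := by
    have := hσ (σ.symm x)
    simp only [Equiv.apply_symm_apply] at this
    rw [this]
    apply Finset.sum_congr rfl
    intro k hk
    rw [hca k (Finset.mem_range.mp hk)]
  rw [hB, ← hsplit]
  exact hc (σ.symm x)

/-- silhouette equivalence.
Jobs are 0-indexed `0,...,n-1`; the two partial assignments `a`, `b` both cover jobs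
`0,...,ℓ-1`; their silhouettes (multisets of machine loads) are equal. -/
theorem silhouette_equivalence
    (n ℓ m : ℕ) (w : ℕ → ℕ) (a b : ℕ → Fin m) (hl : ℓ ≤ n)
    (hsil :
      Multiset.map (fun x : Fin m => ∑ k ∈ Finset.range ℓ, if a k = x then w k else 0)
          (Finset.univ.val)
        = Multiset.map (fun x : Fin m => ∑ k ∈ Finset.range ℓ, if b k = x then w k else 0)
          (Finset.univ.val))
    (U : ℕ) :
    (∃ c : ℕ → Fin m, (∀ k, k < ℓ → c k = a k) ∧
        ∀ x : Fin m, (∑ k ∈ Finset.range n, if c k = x then w k else 0) ≤ U)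
  ↔ (∃ c : ℕ → Fin m, (∀ k, k < ℓ → c k = b k) ∧
        ∀ x : Fin m, (∑ k ∈ Finset.range n, if c k = x then w k else 0) ≤ U) := by
  exact ⟨silhouette_mp n ℓ m w a b hl hsil U, silhouette_mp n ℓ m w b a hl hsil.symm U⟩
end

section
/- (Gist equivalence) Let A and B be partial assignments of jobs j_1,...,j_ℓ of a P||Cmax decision instance (W, m, U), both feasible (all loads ≤ U), and let i = ℓ+1. If the multisets { φ(i, C_1^A),..., φ(i, C_m^A) } and { φ(i, C_1^B),..., φ(i, C_m^B) } are equal, then A has a feasible completion if and only if B has a feasible completion. -/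
open Finset

lemma exists_perm_of_map_eq {α β : Type*} [Fintype α] [DecidableEq α] [DecidableEq β]
    (f g : α → β)
    (h : Multiset.map f Finset.univ.val = Multiset.map g Finset.univ.val) :
    ∃ σ : Equiv.Perm α, ∀ x, g (σ x) = f x := by
  have hcard : ∀ b : β, Fintype.card {x // f x = b} = Fintype.card {x // g x = b} := by
    intro b
    rw [Fintype.card_subtype, Fintype.card_subtype]
    have := congrArg (Multiset.count b) h
    rw [Multiset.count_map, Multiset.count_map] at this
    simpa [Finset.filter, eq_comm, Finset.card] using this
  have e : ∀ b : β, {x // f x = b} ≃ {x // g x = b} :=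
    fun b => Fintype.equivOfCardEq (hcard b)
  refine ⟨(Equiv.sigmaFiberEquiv f).symm.trans
    ((Equiv.sigmaCongrRight e).trans (Equiv.sigmaFiberEquiv g)), fun x => ?_⟩
  exact (e (f x) ⟨x, rfl⟩).2

lemma gist_dir
    (n ℓ m U : ℕ) (w : ℕ → ℕ) (a b : ℕ → Fin m)
    (hl : ℓ ≤ n)
    (hgist :
      Multiset.map (fun x : Fin m =>
          ((Finset.Ico ℓ n).powerset).filter
            (fun J => (∑ k ∈ Finset.range ℓ, if a k = x then w k else 0) + ∑ k ∈ J, w k ≤ U))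
          (Finset.univ.val)
        = Multiset.map (fun x : Fin m =>
          ((Finset.Ico ℓ n).powerset).filter
            (fun J => (∑ k ∈ Finset.range ℓ, if b k = x then w k else 0) + ∑ k ∈ J, w k ≤ U))
          (Finset.univ.val)) :
    (∃ c : ℕ → Fin m, (∀ k, k < ℓ → c k = a k) ∧
        ∀ x : Fin m, (∑ k ∈ Finset.range n, if c k = x then w k else 0) ≤ U) →
    (∃ c : ℕ → Fin m, (∀ k, k < ℓ → c k = b k) ∧
        ∀ x : Fin m, (∑ k ∈ Finset.range n, if c k = x then w k else 0) ≤ U) := by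
  rintro ⟨c, hc, hcf⟩
  obtain ⟨σ, hσ⟩ := exists_perm_of_map_eq _ _ hgist.symm
  -- hσ : ∀ x, φa (σ x) = φb x ... careful with direction
  refine ⟨fun k => if k < ℓ then b k else σ.symm (c k), fun k hk => by simp [hk], fun y => ?_⟩
  have hsplit : ∀ (d : ℕ → Fin m) (x : Fin m),
      (∑ k ∈ Finset.range n, if d k = x then w k else 0)
        = (∑ k ∈ Finset.range ℓ, if d k = x then w k else 0)
          + ∑ k ∈ Finset.Ico ℓ n, if d k = x then w k else 0 := by
    intro d x
    simp only [Finset.range_eq_Ico]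
    exact (Finset.sum_Ico_consecutive _ (Nat.zero_le ℓ) hl).symm
  set x := σ y with hx
  set J : Finset ℕ := (Finset.Ico ℓ n).filter (fun k => c k = x) with hJ
  have hJsum : (∑ k ∈ Finset.Ico ℓ n, if c k = x then w k else 0) = ∑ k ∈ J, w k := by
    rw [hJ, Finset.sum_filter]
  have hmemA : (∑ k ∈ Finset.range ℓ, if a k = x then w k else 0) + ∑ k ∈ J, w k ≤ U := by
    have h1 := hcf x
    rw [hsplit c x, hJsum] at h1
    have h2 : (∑ k ∈ Finset.range ℓ, if c k = x then w k else 0)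
        = ∑ k ∈ Finset.range ℓ, if a k = x then w k else 0 := by
      apply Finset.sum_congr rfl
      intro k hk
      rw [hc k (Finset.mem_range.mp hk)]
    rwa [h2] at h1
  have hmem : J ∈ ((Finset.Ico ℓ n).powerset).filter
      (fun J => (∑ k ∈ Finset.range ℓ, if a k = x then w k else 0) + ∑ k ∈ J, w k ≤ U) := by
    simp only [Finset.mem_filter, Finset.mem_powerset]
    exact ⟨Finset.filter_subset _ _, hmemA⟩
  rw [hσ y] at hmem
  simp only [Finset.mem_filter, Finset.mem_powerset] at hmem
  -- hmem.2 : partial_b y + ∑ J ≤ U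
  rw [hsplit]
  have e1 : (∑ k ∈ Finset.range ℓ,
      if (if k < ℓ then b k else σ.symm (c k)) = y then w k else 0)
      = ∑ k ∈ Finset.range ℓ, if b k = y then w k else 0 := by
    apply Finset.sum_congr rfl
    intro k hk
    rw [if_pos (Finset.mem_range.mp hk)]
  have e2 : (∑ k ∈ Finset.Ico ℓ n,
      if (if k < ℓ then b k else σ.symm (c k)) = y then w k else 0)
      = ∑ k ∈ J, w k := by
    rw [hJ, Finset.sum_filter]
    apply Finset.sum_congr rfl
    intro k hk
    have hk' : ¬ k < ℓ := Nat.not_lt.mpr (Finset.mem_Ico.mp hk).1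
    rw [if_neg hk']
    simp only [Equiv.symm_apply_eq, ← hx]
  rw [e1, e2]
  exact hmem.2


/-- gist equivalence.
Jobs are 0-indexed `0,...,n-1`; both partial assignments cover jobs `0,...,ℓ-1`;
the multisets of φ-sets of the machine loads coincide. -/
theorem gist_equivalence
    (n ℓ m U : ℕ) (w : ℕ → ℕ) (a b : ℕ → Fin m)
    (hl : ℓ ≤ n)
    (hsorted : ∀ i j, i ≤ j → j < n → w j ≤ w i)
    (hfa : ∀ x : Fin m, (∑ k ∈ Finset.range ℓ, if a k = x then w k else 0) ≤ U)
    (hfb : ∀ x : Fin m, (∑ k ∈ Finset.range ℓ, if b k = x then w k else 0) ≤ U)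
    (hgist :
      Multiset.map (fun x : Fin m =>
          ((Finset.Ico ℓ n).powerset).filter
            (fun J => (∑ k ∈ Finset.range ℓ, if a k = x then w k else 0) + ∑ k ∈ J, w k ≤ U))
          (Finset.univ.val)
        = Multiset.map (fun x : Fin m =>
          ((Finset.Ico ℓ n).powerset).filter
            (fun J => (∑ k ∈ Finset.range ℓ, if b k = x then w k else 0) + ∑ k ∈ J, w k ≤ U))
          (Finset.univ.val)) :
    (∃ c : ℕ → Fin m, (∀ k, k < ℓ → c k = a k) ∧
        ∀ x : Fin m, (∑ k ∈ Finset.range n, if c k = x then w k else 0) ≤ U)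
  ↔ (∃ c : ℕ → Fin m, (∀ k, k < ℓ → c k = b k) ∧
        ∀ x : Fin m, (∑ k ∈ Finset.range n, if c k = x then w k else 0) ≤ U) := by
  constructor
  · exact gist_dir n ℓ m U w a b hl hgist
  · exact gist_dir n ℓ m U w b a hl hgist.symm
end

section
/- (LPT++ fill-up special case) Let (W, m, U) be a P||Cmax decision instance with durations sorted decreasingly, A a feasible partial assignment of jobs j_1,...,j_ℓ, and i = ℓ+1. Suppose machine p_x has remaining capacity exactly w_i, i.e., C_x = U - w_i. If A has a feasible completion, then there is a feasible completion of A in which j_i is assigned to p_x. -/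
open Finset

/-- LPT++ fill-up special case.
Jobs are 0-indexed `0,...,n-1`; the partial assignment covers jobs `0,...,ℓ-1`;
machine `x` has remaining capacity exactly `w ℓ`, i.e. `C_x + w ℓ = U`. -/
theorem lpt_fill_up
    (n ℓ m U : ℕ) (w : ℕ → ℕ) (a : ℕ → Fin m)
    (hl : ℓ < n)
    (hsorted : ∀ i j, i ≤ j → j < n → w j ≤ w i)
    (hfeas : ∀ z : Fin m, (∑ k ∈ Finset.range ℓ, if a k = z then w k else 0) ≤ U)
    (x : Fin m)
    (hexact : (∑ k ∈ Finset.range ℓ, if a k = x then w k else 0) + w ℓ = U)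
    (hex : ∃ b : ℕ → Fin m, (∀ k, k < ℓ → b k = a k) ∧
        ∀ z : Fin m, (∑ k ∈ Finset.range n, if b k = z then w k else 0) ≤ U) :
    ∃ b : ℕ → Fin m, (∀ k, k < ℓ → b k = a k) ∧ b ℓ = x ∧
        ∀ z : Fin m, (∑ k ∈ Finset.range n, if b k = z then w k else 0) ≤ U := by
  classical
  obtain ⟨b, hb1, hb2⟩ := hex
  by_cases hxy : b ℓ = x
  · exact ⟨b, hb1, hxy, hb2⟩
  set c : ℕ → Fin m :=
    fun k => if k < ℓ then a k else if k = ℓ then x else if b k = x then b ℓ else b k with hc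
  have hcl : ∀ k, k < ℓ → c k = a k := fun k hk => by simp [hc, hk]
  have hcll : c ℓ = x := by simp [hc]
  refine ⟨c, hcl, hcll, ?_⟩
  have hsplit : ∀ (f : ℕ → Fin m) (z : Fin m),
      (∑ k ∈ Finset.range n, if f k = z then w k else 0)
        = (∑ k ∈ Finset.range ℓ, if f k = z then w k else 0)
          + ∑ k ∈ Finset.Ico ℓ n, if f k = z then w k else 0 := fun f z =>
    (Finset.sum_range_add_sum_Ico _ hl.le).symm
  -- load on x is exactly U
  have hpre : (∑ k ∈ Finset.range ℓ, if c k = x then w k else 0)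
      = ∑ k ∈ Finset.range ℓ, if a k = x then w k else 0 :=
    Finset.sum_congr rfl fun k hk => by rw [hcl k (Finset.mem_range.1 hk)]
  have hSx : (∑ k ∈ Finset.range n, if c k = x then w k else 0) = U := by
    rw [hsplit c x]
    have htail : (∑ k ∈ Finset.Ico ℓ n, if c k = x then w k else 0) = w ℓ := by
      rw [Finset.sum_eq_single_of_mem ℓ (Finset.mem_Ico.mpr ⟨le_refl ℓ, hl⟩)]
      · simp [hcll]
      · intro k hk hne
        have hk1 : ¬ k < ℓ := by
          have := (Finset.mem_Ico.mp hk).1; omega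
        have hck : c k = if b k = x then b ℓ else b k := by simp [hc, hk1, hne]
        by_cases hbx : b k = x
        · simp [hck, hbx, hxy]
        · simp [hck, hbx]
    rw [htail, hpre, hexact]
  -- conservation between machines x and b ℓ
  have hcons : ∀ k, ((if c k = x then w k else 0) + if c k = b ℓ then w k else 0)
      = (if b k = x then w k else 0) + if b k = b ℓ then w k else 0 := by
    intro k
    by_cases hk : k < ℓ
    · have h : c k = b k := by rw [hcl k hk, hb1 k hk]
      rw [h]
    · by_cases hke : k = ℓ
      · rw [hke]
        have h1 : ¬ (x = b ℓ) := fun h => hxy h.symm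
        simp [hcll, h1, hxy]
      · have hck : c k = if b k = x then b ℓ else b k := by simp [hc, hk, hke]
        by_cases hbx : b k = x
        · have h1 : ¬ (x = b ℓ) := fun h => hxy h.symm
          simp [hck, hbx, h1, hxy]
        · simp [hck, hbx]
  have hSsum : (∑ k ∈ Finset.range n, if c k = x then w k else 0)
        + (∑ k ∈ Finset.range n, if c k = b ℓ then w k else 0)
      = (∑ k ∈ Finset.range n, if b k = x then w k else 0)
        + (∑ k ∈ Finset.range n, if b k = b ℓ then w k else 0) := by
    rw [← Finset.sum_add_distrib, ← Finset.sum_add_distrib]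
    exact Finset.sum_congr rfl fun k _ => hcons k
  -- machines other than x and b ℓ are untouched
  have hother : ∀ z : Fin m, z ≠ x → z ≠ b ℓ →
      (∑ k ∈ Finset.range n, if c k = z then w k else 0)
        = ∑ k ∈ Finset.range n, if b k = z then w k else 0 := by
    intro z hzx hzy
    refine Finset.sum_congr rfl fun k _ => ?_
    by_cases hk : k < ℓ
    · rw [hcl k hk, hb1 k hk]
    · by_cases hke : k = ℓ
      · rw [hke]
        have h1 : ¬ (x = z) := fun h => hzx h.symm
        have h2 : ¬ (b ℓ = z) := fun h => hzy h.symm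
        simp [hcll, h1, h2]
      · have hck : c k = if b k = x then b ℓ else b k := by simp [hc, hk, hke]
        by_cases hbx : b k = x
        · have h1 : ¬ (b ℓ = z) := fun h => hzy h.symm
          have h2 : ¬ (x = z) := fun h => hzx h.symm
          simp [hck, hbx, h1, h2]
        · simp [hck, hbx]
  intro z
  by_cases hzx : z = x
  · subst hzx
    exact le_of_eq hSx
  by_cases hzy : z = b ℓ
  · have h1 := hb2 x
    have h2 := hb2 (b ℓ)
    rw [hzy]
    omega
  · rw [hother z hzx hzy]
    exact hb2 z
end

section
/- (Two-duration dynamic program) Suppose after a partial assignment with machine loads C_1,...,C_m (each ≤ U), there remain n_a jobs of duration a and n_b jobs of duration b. Define t(x, k) = -∞ if C_x + k·a > U and t(x, k) = ⌊(U - C_x - k·a)/b⌋ otherwise, and define T(1, k) = t(1, k) and T(x, k) = max_{0 ≤ i ≤ k} ( T(x-1, k-i) + t(x, i) ) for x > 1. Then a feasible completion (all loads ≤ U) exists if and only if T(m, n_a) ≥ n_b. -/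
/-- `dpT' U a b C x k` is `t(x, k)`: `⊥` if `C x + k·a > U`, else `⌊(U - C x - k·a)/b⌋`. -/
def dpT' (U a b : ℕ) (C : ℕ → ℕ) (x k : ℕ) : WithBot ℕ :=
  if U < C x + k * a then ⊥ else (((U - C x - k * a) / b : ℕ) : WithBot ℕ)

/-- The two-duration dynamic program `T(x, k)` over machines `1,...,x`. -/
def dpT (U a b : ℕ) (C : ℕ → ℕ) : ℕ → ℕ → WithBot ℕ
  | 0, _ => ⊥
  | 1, k => dpT' U a b C 1 k
  | x + 2, k =>
      (Finset.range (k + 1)).sup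
        (fun i => dpT U a b C (x + 1) (k - i) + dpT' U a b C (x + 2) i)

open Finset

lemma dpT'_le_iff (U a b : ℕ) (hb : 0 < b) (C : ℕ → ℕ) (y i j : ℕ) :
    (j : WithBot ℕ) ≤ dpT' U a b C y i ↔ C y + i * a + j * b ≤ U := by
  unfold dpT'
  split_ifs with h
  · simp only [le_bot_iff]
    constructor
    · intro hj; exact absurd hj (by exact_mod_cast WithBot.coe_ne_bot)
    · intro hj; nlinarith
  · have : ((j : ℕ) : WithBot ℕ) ≤ (((U - C y - i * a) / b : ℕ) : WithBot ℕ) ↔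
        j ≤ (U - C y - i * a) / b := by exact_mod_cast Iff.rfl
    rw [this, Nat.le_div_iff_mul_le hb]
    omega

lemma nat_le_add_split {s t : WithBot ℕ} {n : ℕ} (h : (n : WithBot ℕ) ≤ s + t) :
    ∃ j1 j2 : ℕ, j1 + j2 = n ∧ (j1 : WithBot ℕ) ≤ s ∧ (j2 : WithBot ℕ) ≤ t := by
  induction s using WithBot.recBotCoe with
  | bot => simp at h
  | coe s =>
    induction t using WithBot.recBotCoe with
    | bot => simp at h
    | coe t =>
      have h' : n ≤ s + t := by
        rw [Nat.cast_withBot, ← WithBot.coe_add, WithBot.coe_le_coe] at h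
        exact h
      refine ⟨min n s, n - min n s, by omega, ?_, ?_⟩
      · rw [Nat.cast_withBot, WithBot.coe_le_coe]; exact min_le_right n s
      · rw [Nat.cast_withBot, WithBot.coe_le_coe]; omega

lemma dp_char (U a b : ℕ) (hb : 0 < b) (C : ℕ → ℕ) (x : ℕ) :
    ∀ k nb : ℕ,
      ((nb : WithBot ℕ) ≤ dpT U a b C (x + 1) k ↔
        ∃ ka kb : ℕ → ℕ, (∑ y ∈ Icc 1 (x + 1), ka y) = k ∧
          (∑ y ∈ Icc 1 (x + 1), kb y) = nb ∧
          ∀ y ∈ Icc 1 (x + 1), C y + ka y * a + kb y * b ≤ U) := by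
  induction x with
  | zero =>
    intro k nb
    simp only [dpT, Icc_self, sum_singleton, mem_singleton]
    rw [dpT'_le_iff U a b hb C 1 k nb]
    constructor
    · intro h
      exact ⟨fun _ => k, fun _ => nb, rfl, rfl, fun y hy => by subst hy; exact h⟩
    · rintro ⟨ka, kb, rfl, rfl, h⟩
      exact h 1 rfl
  | succ x ih =>
    intro k nb
    have key : dpT U a b C (x + 2) k =
        (range (k + 1)).sup
          (fun i => dpT U a b C (x + 1) (k - i) + dpT' U a b C (x + 2) i) := by
      simp [dpT]
    rw [key]
    constructor
    · intro h
      rw [Finset.le_sup_iff (by exact_mod_cast bot_lt_iff_ne_bot.mpr WithBot.coe_ne_bot)] at h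
      obtain ⟨i, hi, hle⟩ := h
      have hik : i ≤ k := by simpa using Nat.lt_succ_iff.mp (mem_range.mp hi)
      obtain ⟨j1, j2, hj, hle1, hle2⟩ := nat_le_add_split hle
      obtain ⟨ka, kb, hka, hkb, hcon⟩ := (ih (k - i) j1).mp hle1
      have h2 : C (x + 2) + i * a + j2 * b ≤ U := (dpT'_le_iff U a b hb C _ _ _).mp hle2
      refine ⟨Function.update ka (x + 2) i, Function.update kb (x + 2) j2, ?_, ?_, ?_⟩
      · rw [Finset.sum_Icc_succ_top (by omega : 1 ≤ x + 2), Function.update_self]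
        have hupd : ∀ y ∈ Icc 1 (x + 1), Function.update ka (x + 2) i y = ka y := by
          intro y hy
          exact Function.update_of_ne (by have := mem_Icc.mp hy; omega) _ _
        rw [Finset.sum_congr rfl hupd, hka]
        omega
      · rw [Finset.sum_Icc_succ_top (by omega : 1 ≤ x + 2), Function.update_self]
        have hupd : ∀ y ∈ Icc 1 (x + 1), Function.update kb (x + 2) j2 y = kb y := by
          intro y hy
          exact Function.update_of_ne (by have := mem_Icc.mp hy; omega) _ _
        rw [Finset.sum_congr rfl hupd, hkb]
        omega
      · intro y hy
        rcases eq_or_ne y (x + 2) with rfl | hne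
        · simpa [Function.update_self] using h2
        · rw [Function.update_of_ne hne, Function.update_of_ne hne]
          exact hcon y (mem_Icc.mpr ⟨(mem_Icc.mp hy).1, by have := mem_Icc.mp hy; omega⟩)
    · rintro ⟨ka, kb, hka, hkb, hcon⟩
      rw [Finset.sum_Icc_succ_top (by omega : 1 ≤ x + 2)] at hka hkb
      set i := ka (x + 2) with hi
      set j2 := kb (x + 2) with hj2
      have hik : i ≤ k := by omega
      have h1 : ((∑ y ∈ Icc 1 (x + 1), kb y : ℕ) : WithBot ℕ) ≤
          dpT U a b C (x + 1) (k - i) :=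
        (ih (k - i) _).mpr ⟨ka, kb, by omega, rfl,
          fun y hy => hcon y (mem_Icc.mpr ⟨(mem_Icc.mp hy).1, by have := mem_Icc.mp hy; omega⟩)⟩
      have h2 : (j2 : WithBot ℕ) ≤ dpT' U a b C (x + 2) i :=
        (dpT'_le_iff U a b hb C _ _ _).mpr (hcon (x + 2) (mem_Icc.mpr ⟨by omega, le_refl _⟩))
      calc (nb : WithBot ℕ) = ((∑ y ∈ Icc 1 (x + 1), kb y : ℕ) : WithBot ℕ) + (j2 : WithBot ℕ) := by
            rw [← Nat.cast_add, hkb]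
        _ ≤ dpT U a b C (x + 1) (k - i) + dpT' U a b C (x + 2) i := add_le_add h1 h2
        _ ≤ _ := Finset.le_sup (f := fun j => dpT U a b C (x + 1) (k - j) + dpT' U a b C (x + 2) j) (b := i) (mem_range.mpr (Nat.lt_succ_of_le hik))

/-- two-duration dynamic program decides feasibility.
Machines are indexed `1,...,m`; a completion is given by per-machine counts
`ka x` (jobs of duration `a`) and `kb x` (jobs of duration `b`). -/
theorem two_duration_dp
    (m U a b na nb : ℕ) (C : ℕ → ℕ)
    (hm : 1 ≤ m) (ha : 0 < a) (hb : 0 < b)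
    (hC : ∀ x ∈ Finset.Icc 1 m, C x ≤ U) :
    (∃ ka kb : ℕ → ℕ,
        (∑ x ∈ Finset.Icc 1 m, ka x) = na ∧
        (∑ x ∈ Finset.Icc 1 m, kb x) = nb ∧
        ∀ x ∈ Finset.Icc 1 m, C x + ka x * a + kb x * b ≤ U)
      ↔ (nb : WithBot ℕ) ≤ dpT U a b C m na := by
  obtain ⟨x, rfl⟩ : ∃ x, m = x + 1 := ⟨m - 1, by omega⟩
  exact (dp_char U a b hb C x na nb).symm
end

section
/- (Correctness of T in the two-duration DP) With t and T defined as: t(x,k) = -∞ if C_x + k·a > U, else ⌊(U - C_x - k·a)/b⌋; T(1,k) = t(1,k); T(x,k) = max_{0≤i≤k} T(x-1, k-i) + t(x, i) for x > 1; the value T(x, k) equals the maximum over all ways of distributing k jobs of duration a among the first x machines (respecting load bound U) of the total number of jobs of duration b that can additionally be placed on these x machines without exceeding U, and equals -∞ if no such distribution of the k duration-a jobs exists. -/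
lemma dpT'_eq_bot_iff (U a b : ℕ) (C : ℕ → ℕ) (x k : ℕ) :
    dpT' U a b C x k = ⊥ ↔ U < C x + k * a := by
  unfold dpT'; split <;> simp_all

lemma dpT'_of_le {U a b : ℕ} {C : ℕ → ℕ} {x k : ℕ} (h : C x + k * a ≤ U) :
    dpT' U a b C x k = (((U - C x - k * a) / b : ℕ) : WithBot ℕ) := by
  unfold dpT'; rw [if_neg (not_lt.2 h)]

lemma dp_main (U a b : ℕ) (C : ℕ → ℕ) :
    ∀ x k : ℕ,
      (dpT U a b C (x + 1) k ≠ ⊥ ↔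
        ∃ g : ℕ → ℕ, (∑ y ∈ Finset.Icc 1 (x + 1), g y) = k ∧
          ∀ y ∈ Finset.Icc 1 (x + 1), C y + g y * a ≤ U) ∧
      (∀ g : ℕ → ℕ, (∑ y ∈ Finset.Icc 1 (x + 1), g y) = k →
          (∀ y ∈ Finset.Icc 1 (x + 1), C y + g y * a ≤ U) →
          (((∑ y ∈ Finset.Icc 1 (x + 1), (U - C y - g y * a) / b : ℕ)) : WithBot ℕ)
            ≤ dpT U a b C (x + 1) k) ∧
      (dpT U a b C (x + 1) k ≠ ⊥ →
        ∃ g : ℕ → ℕ, (∑ y ∈ Finset.Icc 1 (x + 1), g y) = k ∧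
          (∀ y ∈ Finset.Icc 1 (x + 1), C y + g y * a ≤ U) ∧
          dpT U a b C (x + 1) k
            = (((∑ y ∈ Finset.Icc 1 (x + 1), (U - C y - g y * a) / b : ℕ)) : WithBot ℕ)) := by
  intro x
  induction x with
  | zero =>
    intro k
    have hIcc : Finset.Icc 1 1 = {1} := Finset.Icc_self 1
    simp only [hIcc, Finset.sum_singleton, Finset.mem_singleton]
    have hdp : dpT U a b C 1 k = dpT' U a b C 1 k := rfl
    by_cases h : C 1 + k * a ≤ U
    · refine ⟨⟨fun _ => ⟨fun _ => k, rfl, fun y hy => by subst hy; exact h⟩,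
        fun _ => by rw [hdp, dpT'_of_le h]; exact WithBot.coe_ne_bot⟩, ?_, ?_⟩
      · intro g hg hcon
        rw [hdp, ← hg, dpT'_of_le (hcon 1 rfl)]
      · intro _
        exact ⟨fun _ => k, rfl, fun y hy => by subst hy; exact h,
          by rw [hdp, dpT'_of_le h]⟩
    · have hbot : dpT U a b C 1 k = ⊥ := by
        rw [hdp, dpT'_eq_bot_iff]; exact lt_of_not_ge h
      refine ⟨⟨fun hne => absurd hbot hne, ?_⟩, ?_, fun hne => absurd hbot hne⟩
      · rintro ⟨g, hg, hcon⟩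
        exact absurd (hg ▸ hcon 1 rfl) h
      · intro g hg hcon
        exact absurd (hg ▸ hcon 1 rfl) h
  | succ x ih =>
    intro k
    simp only [show x + 1 + 1 = x + 2 from rfl]
    have hdp : dpT U a b C (x + 2) k =
        (Finset.range (k + 1)).sup
          (fun i => dpT U a b C (x + 1) (k - i) + dpT' U a b C (x + 2) i) := rfl
    have hnm : (x + 2) ∉ Finset.Icc 1 (x + 1) := by
      simp [Finset.mem_Icc]
    have hsplit : ∀ f : ℕ → ℕ, (∑ y ∈ Finset.Icc 1 (x + 2), f y)
        = (∑ y ∈ Finset.Icc 1 (x + 1), f y) + f (x + 2) := fun f =>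
      Finset.sum_Icc_succ_top (by omega) f
    -- combining a distribution on 1..x+1 with i jobs on machine x+2
    have hcomb : ∀ (g' : ℕ → ℕ) (i : ℕ), i ≤ k →
        (∑ y ∈ Finset.Icc 1 (x + 1), g' y) = k - i →
        (∀ y ∈ Finset.Icc 1 (x + 1), C y + g' y * a ≤ U) →
        C (x + 2) + i * a ≤ U →
        ∃ g : ℕ → ℕ, (∑ y ∈ Finset.Icc 1 (x + 2), g y) = k ∧
          (∀ y ∈ Finset.Icc 1 (x + 2), C y + g y * a ≤ U) ∧
          (∀ y ∈ Finset.Icc 1 (x + 1), g y = g' y) ∧ g (x + 2) = i := by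
      intro g' i hik hsum hcon hlast
      refine ⟨fun y => if y = x + 2 then i else g' y, ?_, ?_, ?_, by simp⟩
      · rw [hsplit]
        have : (∑ y ∈ Finset.Icc 1 (x + 1), if y = x + 2 then i else g' y)
            = ∑ y ∈ Finset.Icc 1 (x + 1), g' y := by
          refine Finset.sum_congr rfl fun y hy => ?_
          have : y ≠ x + 2 := fun h => hnm (h ▸ hy)
          simp [this]
        rw [this, hsum]
        simp
        omega
      · intro y hy
        by_cases hy2 : y = x + 2
        · subst hy2; simpa using hlast
        · have : y ∈ Finset.Icc 1 (x + 1) := by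
            simp only [Finset.mem_Icc] at hy ⊢; omega
          simpa [hy2] using hcon y this
      · intro y hy
        have : y ≠ x + 2 := fun h => hnm (h ▸ hy)
        simp [this]
    refine ⟨⟨?_, ?_⟩, ?_, ?_⟩
    · -- ≠ ⊥ → ∃
      intro hne
      rw [hdp] at hne
      have : ∃ i ∈ Finset.range (k + 1),
          dpT U a b C (x + 1) (k - i) + dpT' U a b C (x + 2) i ≠ ⊥ := by
        by_contra hall
        push_neg at hall
        exact hne (Finset.sup_eq_bot_iff _ _ |>.2 hall)
      obtain ⟨i, hi, hterm⟩ := this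
      rw [Ne, WithBot.add_eq_bot, not_or] at hterm
      obtain ⟨h1, h2⟩ := hterm
      obtain ⟨g', hsum, hcon⟩ := (ih (k - i)).1.1 h1
      have hlast : C (x + 2) + i * a ≤ U := by
        by_contra hl
        exact h2 ((dpT'_eq_bot_iff U a b C (x + 2) i).2 (lt_of_not_ge hl))
      have hik : i ≤ k := Nat.lt_succ_iff.1 (Finset.mem_range.1 hi)
      obtain ⟨g, hg1, hg2, _, _⟩ := hcomb g' i hik hsum hcon hlast
      exact ⟨g, hg1, hg2⟩
    · -- ∃ → ≠ ⊥
      rintro ⟨g, hsum, hcon⟩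
      have hik : g (x + 2) ≤ k := by
        rw [← hsum]
        exact Finset.single_le_sum (fun y _ => Nat.zero_le _)
          (Finset.mem_Icc.2 ⟨by omega, le_rfl⟩)
      have hsum' : (∑ y ∈ Finset.Icc 1 (x + 1), g y) = k - g (x + 2) := by
        have := hsplit g
        omega
      have h1 : dpT U a b C (x + 1) (k - g (x + 2)) ≠ ⊥ :=
        (ih (k - g (x + 2))).1.2 ⟨g, hsum', fun y hy => hcon y
          (by simp only [Finset.mem_Icc] at hy ⊢; omega)⟩
      have h2 : dpT' U a b C (x + 2) (g (x + 2)) ≠ ⊥ := by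
        rw [Ne, dpT'_eq_bot_iff, not_lt]
        exact hcon (x + 2) (Finset.mem_Icc.2 ⟨by omega, le_rfl⟩)
      have hterm : dpT U a b C (x + 1) (k - g (x + 2)) + dpT' U a b C (x + 2) (g (x + 2)) ≠ ⊥ := by
        rw [Ne, WithBot.add_eq_bot, not_or]; exact ⟨h1, h2⟩
      intro hbot
      rw [hdp] at hbot
      have hmem : g (x + 2) ∈ Finset.range (k + 1) := Finset.mem_range.2 (Nat.lt_succ_iff.2 hik)
      have := Finset.le_sup (f := fun i => dpT U a b C (x + 1) (k - i) + dpT' U a b C (x + 2) i) hmem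
      rw [hbot] at this
      exact hterm (le_bot_iff.1 this)
    · -- upper bound
      intro g hsum hcon
      set i := g (x + 2) with hi
      have hik : i ≤ k := by
        rw [← hsum]
        exact Finset.single_le_sum (fun y _ => Nat.zero_le _)
          (Finset.mem_Icc.2 ⟨by omega, le_rfl⟩)
      have hsum' : (∑ y ∈ Finset.Icc 1 (x + 1), g y) = k - i := by
        have := hsplit g
        omega
      have hcon' : ∀ y ∈ Finset.Icc 1 (x + 1), C y + g y * a ≤ U := fun y hy =>
        hcon y (by simp only [Finset.mem_Icc] at hy ⊢; omega)
      have hIH := (ih (k - i)).2.1 g hsum' hcon'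
      have hlast : C (x + 2) + i * a ≤ U :=
        hcon (x + 2) (Finset.mem_Icc.2 ⟨by omega, le_rfl⟩)
      rw [hdp, hsplit (fun y => (U - C y - g y * a) / b), Nat.cast_add]
      calc ((∑ y ∈ Finset.Icc 1 (x + 1), (U - C y - g y * a) / b : ℕ) : WithBot ℕ)
            + ((U - C (x + 2) - g (x + 2) * a) / b : ℕ)
          ≤ dpT U a b C (x + 1) (k - i) + dpT' U a b C (x + 2) i := by
            rw [dpT'_of_le hlast, ← hi]
            exact add_le_add hIH le_rfl
        _ ≤ _ := Finset.le_sup (f := fun i => dpT U a b C (x + 1) (k - i) + dpT' U a b C (x + 2) i) (Finset.mem_range.2 (Nat.lt_succ_iff.2 hik))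
    · -- attained
      intro hne
      obtain ⟨i, hi, hsup⟩ := Finset.exists_mem_eq_sup (Finset.range (k + 1))
        (by simp) (fun i => dpT U a b C (x + 1) (k - i) + dpT' U a b C (x + 2) i)
      rw [hdp] at hne ⊢
      rw [hsup] at hne ⊢
      rw [Ne, WithBot.add_eq_bot, not_or] at hne
      obtain ⟨h1, h2⟩ := hne
      obtain ⟨g', hsum', hcon', heq'⟩ := (ih (k - i)).2.2 h1
      have hlast : C (x + 2) + i * a ≤ U := by
        by_contra hl
        exact h2 ((dpT'_eq_bot_iff U a b C (x + 2) i).2 (lt_of_not_ge hl))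
      have hik : i ≤ k := Nat.lt_succ_iff.1 (Finset.mem_range.1 hi)
      obtain ⟨g, hg1, hg2, hg3, hg4⟩ := hcomb g' i hik hsum' hcon' hlast
      refine ⟨g, hg1, hg2, ?_⟩
      rw [heq', dpT'_of_le hlast, hsplit (fun y => (U - C y - g y * a) / b), Nat.cast_add]
      congr 1
      · exact Nat.cast_inj.mpr (Finset.sum_congr rfl fun y hy => by rw [hg3 y hy])
      · rw [hg4]

/-- correctness of `T(x, k)`.
`T x k` is `⊥` iff there is no valid distribution of the `k` duration-`a` jobs to
machines `1,...,x`; it is an upper bound on the number of placeable duration-`b` jobs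
for every valid distribution; and, if a valid distribution exists, the bound is attained. -/
theorem two_duration_dp_correct
    (x k U a b : ℕ) (C : ℕ → ℕ)
    (hx : 1 ≤ x) (ha : 0 < a) (hb : 0 < b)
    (hC : ∀ y ∈ Finset.Icc 1 x, C y ≤ U) :
    (dpT U a b C x k = ⊥ ↔
      ¬ ∃ g : ℕ → ℕ, (∑ y ∈ Finset.Icc 1 x, g y) = k ∧
        ∀ y ∈ Finset.Icc 1 x, C y + g y * a ≤ U) ∧
    (∀ g : ℕ → ℕ, (∑ y ∈ Finset.Icc 1 x, g y) = k →
        (∀ y ∈ Finset.Icc 1 x, C y + g y * a ≤ U) →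
        (((∑ y ∈ Finset.Icc 1 x, (U - C y - g y * a) / b : ℕ)) : WithBot ℕ)
          ≤ dpT U a b C x k) ∧
    ((∃ g : ℕ → ℕ, (∑ y ∈ Finset.Icc 1 x, g y) = k ∧
        ∀ y ∈ Finset.Icc 1 x, C y + g y * a ≤ U) →
      ∃ g : ℕ → ℕ, (∑ y ∈ Finset.Icc 1 x, g y) = k ∧
        (∀ y ∈ Finset.Icc 1 x, C y + g y * a ≤ U) ∧
        dpT U a b C x k
          = (((∑ y ∈ Finset.Icc 1 x, (U - C y - g y * a) / b : ℕ)) : WithBot ℕ)) := by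
  obtain ⟨x', rfl⟩ : ∃ x', x = x' + 1 := ⟨x - 1, by omega⟩
  obtain ⟨h1, h2, h3⟩ := dp_main U a b C x' k
  exact ⟨not_ne_iff.symm.trans (not_congr h1), h2,
    fun hex => h3 (h1.2 hex)⟩
end

section
/- (λ lower bound on jobs per machine, used in lifting) In any assignment of n jobs to m machines, for every α with 1 ≤ α ≤ m there exist α machines that together process at least λ_α(n, m) = α·⌊n/m⌋ + min(α, n - ⌊n/m⌋·m) jobs. -/
open Finset

/-- λ lower bound on jobs per machine (used in lifting).
For any assignment `f` of `n` jobs to `m` machines and any `1 ≤ α ≤ m`, some `α`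
machines together process at least `α⌊n/m⌋ + min(α, n mod m)` jobs. -/
theorem lambda_lower_bound
    (n m α : ℕ) (hm : 0 < m) (hα1 : 1 ≤ α) (hαm : α ≤ m)
    (f : Fin n → Fin m) :
    ∃ S : Finset (Fin m), S.card = α ∧
      α * (n / m) + min α (n % m)
        ≤ ∑ x ∈ S, (Finset.univ.filter (fun k : Fin n => f k = x)).card := by
  set g : Fin m → ℕ := fun x => (Finset.univ.filter (fun k : Fin n => f k = x)).card with hg
  have hsum : ∑ x, g x = n := by
    have := Finset.card_eq_sum_card_fiberwise
      (f := f) (s := (Finset.univ : Finset (Fin n))) (t := Finset.univ)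
      (fun x _ => Finset.mem_univ _)
    simpa [hg] using this.symm
  -- choose S of card α maximizing the sum of g
  have hne : ((Finset.univ : Finset (Fin m)).powersetCard α).Nonempty := by
    apply Finset.powersetCard_nonempty.mpr
    simpa using hαm
  obtain ⟨S, hSmem, hSmax⟩ := Finset.exists_max_image _ (fun T => ∑ x ∈ T, g x) hne
  rw [Finset.mem_powersetCard_univ] at hSmem
  refine ⟨S, hSmem, ?_⟩
  show α * (n / m) + min α (n % m) ≤ ∑ x ∈ S, g x
  -- swap argument: every machine outside S has load ≤ every machine in S
  have hswap : ∀ x ∈ S, ∀ y ∉ S, g y ≤ g x := by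
    intro x hx y hy
    have hS' : insert y (S.erase x) ∈ (Finset.univ : Finset (Fin m)).powersetCard α := by
      rw [Finset.mem_powersetCard_univ]
      rw [Finset.card_insert_of_notMem (fun h => hy (Finset.mem_of_mem_erase h)),
        Finset.card_erase_of_mem hx, hSmem]
      omega
    have hle := hSmax _ hS'
    rw [Finset.sum_insert (fun h => hy (Finset.mem_of_mem_erase h))] at hle
    have hSx : ∑ x' ∈ S, g x' = g x + ∑ x' ∈ S.erase x, g x' :=
      (Finset.add_sum_erase S g hx).symm
    omega
  -- minimum load in S
  have hSne : S.Nonempty := by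
    rw [← Finset.card_pos, hSmem]; omega
  obtain ⟨x₀, hx₀, hmin⟩ := Finset.exists_min_image S g hSne
  by_cases hq : n / m + 1 ≤ g x₀
  · -- every machine in S has load ≥ n/m + 1
    have : α * (n / m) + α ≤ ∑ x ∈ S, g x := by
      calc α * (n / m) + α = ∑ _x ∈ S, (n / m + 1) := by
              rw [Finset.sum_const, hSmem, smul_eq_mul]; ring
           _ ≤ ∑ x ∈ S, g x := Finset.sum_le_sum (fun x hx => le_trans hq (hmin x hx))
    have hmin' : min α (n % m) ≤ α := min_le_left _ _
    omega
  · -- machines outside S have load ≤ n/m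
    push_neg at hq
    have hout : ∑ x ∈ Sᶜ, g x ≤ (m - α) * (n / m) := by
      calc ∑ x ∈ Sᶜ, g x ≤ ∑ _x ∈ Sᶜ, (n / m) := by
              apply Finset.sum_le_sum
              intro y hy
              have := hswap x₀ hx₀ y (by simpa using hy)
              omega
           _ = (m - α) * (n / m) := by
              rw [Finset.sum_const, Finset.card_compl, hSmem, smul_eq_mul]
              simp
    have htot : ∑ x ∈ S, g x + ∑ x ∈ Sᶜ, g x = n := by
      rw [Finset.sum_add_sum_compl, hsum]
    have hmul : (m - α) * (n / m) + α * (n / m) = m * (n / m) := by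
      rw [← Nat.add_mul]; congr 1; omega
    have hdm : m * (n / m) + n % m = n := Nat.div_add_mod n m
    have hmin' : min α (n % m) ≤ n % m := min_le_right _ _
    omega
end

section
/- (Three-job endgame) Let (W, m, U) be a P||Cmax decision instance, A a feasible partial assignment of all jobs except the last three j_{n-2}, j_{n-1}, j_n (durations w_{n-2} ≥ w_{n-1} ≥ w_n). If A admits a feasible completion, then at least one of the following two completions is feasible: (1) assign each of j_{n-2}, j_{n-1}, j_n in turn to a currently least loaded machine; or (2) assign j_{n-2} to a second least loaded machine, then assign j_{n-1} and j_n each in turn to a currently least loaded machine. -/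
open Finset

private lemma pick_min {m : ℕ} (hm : 0 < m) (L : Fin m → ℕ) (U c : ℕ)
    (hL : ∀ y, L y ≤ U) (hw : ∃ y, L y + c ≤ U) :
    ∃ x : Fin m, (∀ y, L x ≤ L y) ∧ ∀ y, L y + (if y = x then c else 0) ≤ U := by
  obtain ⟨x, -, hx⟩ := Finset.exists_min_image Finset.univ L ⟨⟨0, hm⟩, Finset.mem_univ _⟩
  obtain ⟨y0, hy0⟩ := hw
  refine ⟨x, fun y => hx y (Finset.mem_univ y), fun y => ?_⟩
  by_cases h : y = x
  · subst h
    have h1 := hx y0 (Finset.mem_univ y0)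
    rw [if_pos rfl]
    omega
  · rw [if_neg h]
    have := hL y
    omega

private theorem aux_three {m U : ℕ} (hm : 2 ≤ m) (L0 : Fin m → ℕ) (A B C : ℕ)
    (hBA : B ≤ A) (hCB : C ≤ B)
    (hU : ∀ z, L0 z ≤ U) (y1 y2 y3 : Fin m)
    (key : ∀ z, L0 z + (if y1 = z then A else 0) + (if y2 = z then B else 0)
      + (if y3 = z then C else 0) ≤ U) :
    ∃ x1 x2 x3 : Fin m,
      ((∀ y, L0 x1 ≤ L0 y) ∨
        (∃ z, (∀ y, L0 z ≤ L0 y) ∧ z ≠ x1 ∧ ∀ y, y ≠ z → L0 x1 ≤ L0 y)) ∧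
      (∀ y, L0 x2 + (if x2 = x1 then A else 0) ≤ L0 y + (if y = x1 then A else 0)) ∧
      (∀ y, L0 x3 + (if x3 = x1 then A else 0) + (if x3 = x2 then B else 0)
          ≤ L0 y + (if y = x1 then A else 0) + (if y = x2 then B else 0)) ∧
      (∀ y, L0 y + (if y = x1 then A else 0) + (if y = x2 then B else 0)
          + (if y = x3 then C else 0) ≤ U) := by
  have hm0 : 0 < m := by omega
  obtain ⟨u, -, hu⟩ := Finset.exists_min_image Finset.univ L0 ⟨⟨0, hm0⟩, Finset.mem_univ _⟩
  have hu' : ∀ y, L0 u ≤ L0 y := fun y => hu y (Finset.mem_univ y)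
  have hne : (Finset.univ.erase u).Nonempty := by
    apply Finset.card_pos.mp
    rw [Finset.card_erase_of_mem (Finset.mem_univ u), Finset.card_univ, Fintype.card_fin]
    omega
  obtain ⟨v, hvmem, hv⟩ := Finset.exists_min_image _ L0 hne
  have hvu : v ≠ u := (Finset.mem_erase.mp hvmem).1
  have huv : u ≠ v := Ne.symm hvu
  have hq : ∀ y, y ≠ u → L0 v ≤ L0 y := fun y hy =>
    hv y (Finset.mem_erase.mpr ⟨hy, Finset.mem_univ y⟩)
  have K1 : L0 y1 + A ≤ U := by
    have h := key y1; rw [if_pos (rfl : y1 = y1)] at h; omega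
  have K2 : L0 y2 + B ≤ U := by
    have h := key y2; rw [if_pos (rfl : y2 = y2)] at h; omega
  have K3 : L0 y3 + C ≤ U := by
    have h := key y3; rw [if_pos (rfl : y3 = y3)] at h; omega
  have K12 : y1 = y2 → L0 y2 + A + B ≤ U := by
    intro h12
    have h := key y2; rw [if_pos h12, if_pos (rfl : y2 = y2)] at h; omega
  have K13 : y1 = y3 → L0 y3 + A + C ≤ U := by
    intro h13
    have h := key y3; rw [if_pos h13, if_pos (rfl : y3 = y3)] at h; omega
  have K23 : y2 = y3 → L0 y3 + B + C ≤ U := by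
    intro h23
    have h := key y3; rw [if_pos h23, if_pos (rfl : y3 = y3)] at h; omega
  have K123 : y1 = y3 → y2 = y3 → L0 y3 + A + B + C ≤ U := by
    intro h13 h23
    have h := key y3; rw [if_pos h13, if_pos h23, if_pos (rfl : y3 = y3)] at h; omega
  rcases le_or_gt (L0 u + A) (L0 v) with hAq | hAq
  · -- CASE 1: put the big job on the least loaded machine u, then again on u
    have O1 : L0 u + A + B ≤ U := by
      by_cases h12 : y1 = y2
      · have h := K12 h12; have := hu' y2; omega
      · by_cases h1u : y1 = u
        · have h2u : y2 ≠ u := fun h => h12 (h1u.trans h.symm)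
          have := hq y2 h2u; omega
        · have := hq y1 h1u; omega
    have hL : ∀ y, L0 y + (if y = u then A else 0) + (if y = u then B else 0) ≤ U := by
      intro y
      by_cases hy : y = u
      · subst hy; rw [if_pos rfl, if_pos rfl]; omega
      · rw [if_neg hy, if_neg hy]; have := hU y; omega
    have hw : ∃ y, (L0 y + (if y = u then A else 0) + (if y = u then B else 0)) + C ≤ U := by
      by_cases h1u : y1 = u
      · by_cases h2u : y2 = u
        · by_cases h3u : y3 = u
          · refine ⟨u, ?_⟩
            rw [if_pos rfl, if_pos rfl]
            have h := K123 (h1u.trans h3u.symm) (h2u.trans h3u.symm)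
            rw [h3u] at h; omega
          · refine ⟨y3, ?_⟩
            rw [if_neg h3u, if_neg h3u]; omega
        · refine ⟨y2, ?_⟩
          rw [if_neg h2u, if_neg h2u]; omega
      · refine ⟨y1, ?_⟩
        rw [if_neg h1u, if_neg h1u]; omega
    obtain ⟨x3, hx3, hfin⟩ := pick_min hm0
      (fun y => L0 y + (if y = u then A else 0) + (if y = u then B else 0)) U C hL hw
    refine ⟨u, u, x3, Or.inl hu', ?_, hx3, hfin⟩
    intro y
    by_cases hy : y = u
    · subst hy; exact le_rfl
    · rw [if_pos rfl, if_neg hy]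
      have := hq y hy; omega
  · -- CASE 2
    by_cases hcond : y2 = u ∧ y3 = u ∧ y1 ≠ u
    · -- option (2): big job on second least loaded v, then u
      obtain ⟨h2u, h3u, h1u⟩ := hcond
      have hBCu : L0 u + B + C ≤ U := by
        have h := K23 (h2u.trans h3u.symm); rw [h3u] at h; omega
      have hQ1 : L0 v + A ≤ U := by have := hq y1 h1u; omega
      have hL : ∀ y, L0 y + (if y = v then A else 0) + (if y = u then B else 0) ≤ U := by
        intro y
        by_cases hyv : y = v
        · subst hyv; rw [if_pos rfl, if_neg hvu]; omega
        · by_cases hyu : y = u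
          · subst hyu; rw [if_neg huv, if_pos rfl]; omega
          · rw [if_neg hyv, if_neg hyu]; have := hU y; omega
      have hw : ∃ y, (L0 y + (if y = v then A else 0) + (if y = u then B else 0)) + C ≤ U := by
        refine ⟨u, ?_⟩
        rw [if_neg huv, if_pos rfl]; omega
      obtain ⟨x3, hx3, hfin⟩ := pick_min hm0
        (fun y => L0 y + (if y = v then A else 0) + (if y = u then B else 0)) U C hL hw
      refine ⟨v, u, x3, Or.inr ⟨u, hu', huv, fun y hy => hq y hy⟩, ?_, hx3, hfin⟩
      intro y
      rw [if_neg huv]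
      by_cases hyv : y = v
      · rw [if_pos hyv]; have := hu' y; omega
      · rw [if_neg hyv]; have := hu' y; omega
    · -- option (1): big job on least loaded u, second job on v
      push_neg at hcond
      have P1 : L0 u + A ≤ U := by have := hu' y1; omega
      have P2 : L0 v + B ≤ U := by
        by_cases h1u : y1 = u
        · by_cases h2u : y2 = u
          · have h := K12 (h1u.trans h2u.symm); rw [h2u] at h; omega
          · have := hq y2 h2u; omega
        · have := hq y1 h1u; omega
      have hL : ∀ y, L0 y + (if y = u then A else 0) + (if y = v then B else 0) ≤ U := by
        intro y
        by_cases hyu : y = u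
        · subst hyu; rw [if_pos rfl, if_neg huv]; omega
        · by_cases hyv : y = v
          · subst hyv; rw [if_neg hvu, if_pos rfl]; omega
          · rw [if_neg hyu, if_neg hyv]; have := hU y; omega
      have hw : ∃ y, (L0 y + (if y = u then A else 0) + (if y = v then B else 0)) + C ≤ U := by
        by_cases h1u : y1 = u
        · by_cases h2u : y2 = u
          · refine ⟨u, ?_⟩
            rw [if_pos rfl, if_neg huv]
            have h := K12 (h1u.trans h2u.symm); rw [h2u] at h; omega
          · by_cases h32 : y3 = y2
            · refine ⟨y2, ?_⟩
              rw [if_neg h2u]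
              have h := K23 h32.symm; rw [h32] at h
              have hb : (if y2 = v then B else 0) ≤ B := by split <;> omega
              omega
            · by_cases h3u : y3 = u
              · refine ⟨u, ?_⟩
                rw [if_pos rfl, if_neg huv]
                have h := K13 (h1u.trans h3u.symm); rw [h3u] at h; omega
              · by_cases h2v : y2 = v
                · refine ⟨y3, ?_⟩
                  have h3v : y3 ≠ v := fun h => h32 (h.trans h2v.symm)
                  rw [if_neg h3u, if_neg h3v]; omega
                · refine ⟨y2, ?_⟩
                  rw [if_neg h2u, if_neg h2v]; omega
        · by_cases h1v : y1 = v
          · by_cases h2v : y2 = v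
            · refine ⟨v, ?_⟩
              rw [if_neg hvu, if_pos rfl]
              have h := K12 (h1v.trans h2v.symm); rw [h2v] at h; omega
            · by_cases h3v : y3 = v
              · refine ⟨v, ?_⟩
                rw [if_neg hvu, if_pos rfl]
                have h := K13 (h1v.trans h3v.symm); rw [h3v] at h; omega
              · by_cases h2u : y2 = u
                · have h3u : y3 ≠ u := fun h => h1u (hcond h2u h)
                  refine ⟨y3, ?_⟩
                  rw [if_neg h3u, if_neg h3v]; omega
                · refine ⟨y2, ?_⟩
                  rw [if_neg h2u, if_neg h2v]; omega
          · refine ⟨y1, ?_⟩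
            rw [if_neg h1u, if_neg h1v]; omega
      obtain ⟨x3, hx3, hfin⟩ := pick_min hm0
        (fun y => L0 y + (if y = u then A else 0) + (if y = v then B else 0)) U C hL hw
      refine ⟨u, v, x3, Or.inl hu', ?_, hx3, hfin⟩
      intro y
      rw [if_neg hvu]
      by_cases hyu : y = u
      · subst hyu; rw [if_pos rfl]; omega
      · rw [if_neg hyu]; have := hq y hyu; omega


/-- three-job endgame (Pruning Rule 3).
Jobs are 0-indexed `0,...,n-1`; the partial assignment `a` covers all jobs except the
last three `n-3, n-2, n-1`. If a feasible completion exists, then one of the two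
considered options is feasible: the three machines `x1, x2, x3` receiving the jobs
`n-3, n-2, n-1` are chosen so that either (1) `x1` is a least loaded machine, or
(2) `x1` is a second least loaded machine, and in both cases `x2` and `x3` are least
loaded machines w.r.t. the successively updated loads. -/
theorem three_job_endgame
    (n m U : ℕ) (w : ℕ → ℕ) (a : ℕ → Fin m)
    (hn : 3 ≤ n) (hm : 2 ≤ m)
    (hsorted : ∀ i j, i ≤ j → j < n → w j ≤ w i)
    (hfeas : ∀ z : Fin m, (∑ k ∈ Finset.range (n - 3), if a k = z then w k else 0) ≤ U)
    (hex : ∃ b : ℕ → Fin m, (∀ k, k < n - 3 → b k = a k) ∧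
        ∀ z : Fin m, (∑ k ∈ Finset.range n, if b k = z then w k else 0) ≤ U) :
    ∃ x1 x2 x3 : Fin m,
      -- the per-machine loads before and after each of the three assignments
      (fun L0 : Fin m → ℕ =>
       (fun L1 : Fin m → ℕ =>
        (fun L2 : Fin m → ℕ =>
         (fun L3 : Fin m → ℕ =>
          -- option (1): x1 least loaded; or option (2): x1 second least loaded
          ((∀ y : Fin m, L0 x1 ≤ L0 y) ∨
           (∃ z : Fin m, (∀ y : Fin m, L0 z ≤ L0 y) ∧ z ≠ x1 ∧
              ∀ y : Fin m, y ≠ z → L0 x1 ≤ L0 y)) ∧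
          -- x2 and x3 least loaded w.r.t. updated loads
          (∀ y : Fin m, L1 x2 ≤ L1 y) ∧
          (∀ y : Fin m, L2 x3 ≤ L2 y) ∧
          -- the resulting completion is feasible
          (∀ y : Fin m, L3 y ≤ U))
         (fun y => L2 y + if y = x3 then w (n - 1) else 0))
        (fun y => L1 y + if y = x2 then w (n - 2) else 0))
       (fun y => L0 y + if y = x1 then w (n - 3) else 0))
      (fun y => ∑ k ∈ Finset.range (n - 3), if a k = y then w k else 0) := by
  obtain ⟨b, hb, hbU⟩ := hex
  have hBA : w (n - 2) ≤ w (n - 3) := hsorted (n - 3) (n - 2) (by omega) (by omega)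
  have hCB : w (n - 1) ≤ w (n - 2) := hsorted (n - 2) (n - 1) (by omega) (by omega)
  have key : ∀ z : Fin m,
      (∑ k ∈ Finset.range (n - 3), if a k = z then w k else 0)
        + (if b (n - 3) = z then w (n - 3) else 0)
        + (if b (n - 2) = z then w (n - 2) else 0)
        + (if b (n - 1) = z then w (n - 1) else 0) ≤ U := by
    intro z
    have h := hbU z
    rw [show n = n - 3 + 1 + 1 + 1 from by omega] at h
    rw [Finset.sum_range_succ, Finset.sum_range_succ, Finset.sum_range_succ] at h
    rw [show n - 3 + 1 + 1 = n - 1 from by omega, show n - 3 + 1 = n - 2 from by omega] at h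
    have hsum : (∑ k ∈ Finset.range (n - 3), if b k = z then w k else 0)
        = ∑ k ∈ Finset.range (n - 3), if a k = z then w k else 0 :=
      Finset.sum_congr rfl fun k hk => by rw [hb k (Finset.mem_range.mp hk)]
    rw [hsum] at h
    exact h
  exact aux_three hm (fun y => ∑ k ∈ Finset.range (n - 3), if a k = y then w k else 0)
    (w (n - 3)) (w (n - 2)) (w (n - 1)) hBA hCB hfeas (b (n - 3)) (b (n - 2)) (b (n - 1)) key
end

section
/- (Few jobs, least loaded machines suffice) Let (W, m, U) be a P||Cmax decision instance and A a feasible partial assignment with exactly i < m jobs remaining unassigned. If A admits a feasible completion, then A admits a feasible completion in which every remaining job is assigned to one of the i machines with smallest current load. -/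
open Finset

lemma exists_min_subset {m : ℕ} (C : Fin m → ℕ) (i : ℕ) (hi : i ≤ m) :
    ∃ S : Finset (Fin m), S.card = i ∧ ∀ x ∈ S, ∀ y ∉ S, C x ≤ C y := by
  induction i with
  | zero => exact ⟨∅, rfl, by simp⟩
  | succ j ih =>
    obtain ⟨S, hcard, hmin⟩ := ih (Nat.le_of_succ_le hi)
    have hne : (Sᶜ : Finset (Fin m)).Nonempty := by
      rw [← Finset.card_pos, Finset.card_compl, Fintype.card_fin, hcard]
      omega
    obtain ⟨y₀, hy₀, hy₀min⟩ := Finset.exists_min_image _ C hne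
    have hy₀S : y₀ ∉ S := by simpa using hy₀
    refine ⟨insert y₀ S, ?_, ?_⟩
    · rw [Finset.card_insert_of_notMem hy₀S, hcard]
    · intro x hx y hy
      rcases Finset.mem_insert.mp hx with rfl | hx
      · exact hy₀min y (by simp only [Finset.mem_compl]; exact fun h => hy (Finset.mem_insert_of_mem h))
      · exact hmin x hx y (fun h => hy (Finset.mem_insert_of_mem h))

lemma complete_in_S (n m U i : ℕ) (w : ℕ → ℕ) (a : ℕ → Fin m) (hin : i ≤ n)
    (S : Finset (Fin m)) (hScard : S.card = i)
    (hmin : ∀ x ∈ S, ∀ y ∉ S,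
      (∑ k ∈ Finset.range (n - i), if a k = x then w k else 0)
        ≤ (∑ k ∈ Finset.range (n - i), if a k = y then w k else 0)) :
    ∀ c (b : ℕ → Fin m), (∀ k, k < n - i → b k = a k) →
      (∀ z, (∑ k ∈ Finset.range n, if b k = z then w k else 0) ≤ U) →
      ((Finset.Ico (n - i) n).filter (fun k => b k ∉ S)).card ≤ c →
      ∃ b' : ℕ → Fin m, (∀ k, k < n - i → b' k = a k) ∧
        (∀ k, n - i ≤ k → k < n → b' k ∈ S) ∧
        ∀ z, (∑ k ∈ Finset.range n, if b' k = z then w k else 0) ≤ U := by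
  intro c
  induction c with
  | zero =>
    intro b hagree hfeas hcount
    refine ⟨b, hagree, ?_, hfeas⟩
    intro k hk1 hk2
    by_contra h
    have : k ∈ (Finset.Ico (n - i) n).filter (fun k => b k ∉ S) := by
      simp [Finset.mem_filter, Finset.mem_Ico, hk1, hk2, h]
    have := Finset.card_pos.mpr ⟨k, this⟩
    omega
  | succ c ih =>
    intro b hagree hfeas hcount
    by_cases hc0 : ((Finset.Ico (n - i) n).filter (fun k => b k ∉ S)).card = 0
    · exact ih b hagree hfeas (by omega)
    obtain ⟨k₀, hk₀⟩ := Finset.card_pos.mp (Nat.pos_of_ne_zero hc0)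
    rw [Finset.mem_filter, Finset.mem_Ico] at hk₀
    obtain ⟨⟨hk₀1, hk₀2⟩, hk₀S⟩ := hk₀
    -- find x ∈ S not in the image of remaining jobs
    set T := (Finset.Ico (n - i) n).image b with hT
    have hbk₀T : b k₀ ∈ T := Finset.mem_image_of_mem b (Finset.mem_Ico.mpr ⟨hk₀1, hk₀2⟩)
    have hcardT : T.card ≤ i := by
      rw [hT]
      refine le_trans Finset.card_image_le ?_
      rw [Nat.card_Ico]
      omega
    have hST : ∃ x ∈ S, x ∉ T := by
      by_contra h
      push_neg at h
      have hsub : S ⊆ T.erase (b k₀) := by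
        intro x hx
        exact Finset.mem_erase.mpr ⟨fun he => hk₀S (he ▸ hx), h x hx⟩
      have h1 := Finset.card_le_card hsub
      have h2 := Finset.card_erase_of_mem hbk₀T
      have h3 := Finset.card_pos.mpr ⟨_, hbk₀T⟩
      omega
    obtain ⟨x, hxS, hxT⟩ := hST
    have hxnotb : ∀ k, n - i ≤ k → k < n → b k ≠ x := by
      intro k h1 h2 he
      exact hxT (he ▸ Finset.mem_image_of_mem b (Finset.mem_Ico.mpr ⟨h1, h2⟩))
    set b' : ℕ → Fin m := Function.update b k₀ x with hb'
    have hb'eq : ∀ k, k ≠ k₀ → b' k = b k := by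
      intro k h
      simp [hb', Function.update_apply, h]
    have hb'k₀ : b' k₀ = x := by simp [hb']
    have hagree' : ∀ k, k < n - i → b' k = a k := by
      intro k hk
      rw [hb'eq k (by omega), hagree k hk]
    -- split sums
    have hsplit : ∀ (f : ℕ → Fin m) (z : Fin m),
        (∑ k ∈ Finset.range n, if f k = z then w k else 0)
          = (∑ k ∈ Finset.range (n - i), if f k = z then w k else 0)
            + ∑ k ∈ Finset.Ico (n - i) n, if f k = z then w k else 0 := by
      intro f z
      rw [Finset.range_eq_Ico, Finset.range_eq_Ico]
      exact (Finset.sum_Ico_consecutive (f := fun k => if f k = z then w k else 0) (Nat.zero_le _) (by omega : n - i ≤ n)).symm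
    have hCagree : ∀ (f : ℕ → Fin m), (∀ k, k < n - i → f k = a k) → ∀ z : Fin m,
        (∑ k ∈ Finset.range (n - i), if f k = z then w k else 0)
          = (∑ k ∈ Finset.range (n - i), if a k = z then w k else 0) := by
      intro f hf z
      refine Finset.sum_congr rfl fun k hk => ?_
      rw [hf k (Finset.mem_range.mp hk)]
    have hfeas' : ∀ z, (∑ k ∈ Finset.range n, if b' k = z then w k else 0) ≤ U := by
      intro z
      by_cases hz : x = z
      · subst hz
        rw [hsplit b' x, hCagree b' hagree' x]
        have hico : (∑ k ∈ Finset.Ico (n - i) n, if b' k = x then w k else 0) = w k₀ := by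
          have : ∀ k ∈ Finset.Ico (n - i) n,
              (if b' k = x then w k else 0) = (if k = k₀ then w k else 0) := by
            intro k hk
            rw [Finset.mem_Ico] at hk
            by_cases hkk : k = k₀
            · subst hkk; simp [hb'k₀]
            · rw [hb'eq k hkk]
              simp [hxnotb k hk.1 hk.2, hkk]
          rw [Finset.sum_congr rfl this, Finset.sum_ite_eq' _ k₀ w,
            if_pos (Finset.mem_Ico.mpr ⟨hk₀1, hk₀2⟩)]
        rw [hico]
        have hxy := hmin x hxS (b k₀) hk₀S
        have hylow : (∑ k ∈ Finset.range (n - i), if a k = b k₀ then w k else 0) + w k₀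
            ≤ ∑ k ∈ Finset.range n, if b k = b k₀ then w k else 0 := by
          rw [hsplit b (b k₀), hCagree b hagree (b k₀)]
          have : w k₀ ≤ ∑ k ∈ Finset.Ico (n - i) n, if b k = b k₀ then w k else 0 := by
            have := Finset.single_le_sum (f := fun k => if b k = b k₀ then w k else 0)
              (fun k _ => Nat.zero_le _) (Finset.mem_Ico.mpr ⟨hk₀1, hk₀2⟩)
            simpa using this
          omega
        have := hfeas (b k₀)
        omega
      · calc (∑ k ∈ Finset.range n, if b' k = z then w k else 0)
            ≤ ∑ k ∈ Finset.range n, if b k = z then w k else 0 := by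
              refine Finset.sum_le_sum fun k _ => ?_
              by_cases hkk : k = k₀
              · subst hkk
                rw [hb'k₀, if_neg hz]
                exact Nat.zero_le _
              · rw [hb'eq k hkk]
          _ ≤ U := hfeas z
    refine ih b' hagree' hfeas' ?_
    have hsub : (Finset.Ico (n - i) n).filter (fun k => b' k ∉ S)
        ⊆ ((Finset.Ico (n - i) n).filter (fun k => b k ∉ S)).erase k₀ := by
      intro k hk
      rw [Finset.mem_filter] at hk
      have hkk : k ≠ k₀ := by
        intro h; subst h
        exact hk.2 (hb'k₀ ▸ hxS)
      refine Finset.mem_erase.mpr ⟨hkk, Finset.mem_filter.mpr ⟨hk.1, ?_⟩⟩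
      exact fun h => hk.2 (by rwa [hb'eq k hkk])
    have h1 := Finset.card_le_card hsub
    have h2 := Finset.card_erase_of_mem (s := (Finset.Ico (n - i) n).filter (fun k => b k ∉ S))
      (a := k₀) (by rw [Finset.mem_filter]; exact ⟨Finset.mem_Ico.mpr ⟨hk₀1, hk₀2⟩, hk₀S⟩)
    omega

/-- with `i < m` jobs remaining, the `i` least loaded machines suffice
(Pruning Rule 4). Jobs are 0-indexed `0,...,n-1`; the partial assignment covers jobs
`0,...,n-i-1`, leaving `i` jobs unassigned. -/
theorem few_jobs_least_loaded
    (n m U i : ℕ) (w : ℕ → ℕ) (a : ℕ → Fin m)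
    (hi : i < m) (hin : i ≤ n)
    (hsorted : ∀ k j, k ≤ j → j < n → w j ≤ w k)
    (hfeas : ∀ z : Fin m, (∑ k ∈ Finset.range (n - i), if a k = z then w k else 0) ≤ U)
    (hex : ∃ b : ℕ → Fin m, (∀ k, k < n - i → b k = a k) ∧
        ∀ z : Fin m, (∑ k ∈ Finset.range n, if b k = z then w k else 0) ≤ U) :
    ∃ S : Finset (Fin m), S.card = i ∧
      (∀ x ∈ S, ∀ y : Fin m, y ∉ S →
        (∑ k ∈ Finset.range (n - i), if a k = x then w k else 0)
          ≤ (∑ k ∈ Finset.range (n - i), if a k = y then w k else 0)) ∧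
      ∃ b : ℕ → Fin m, (∀ k, k < n - i → b k = a k) ∧
        (∀ k, n - i ≤ k → k < n → b k ∈ S) ∧
        ∀ z : Fin m, (∑ k ∈ Finset.range n, if b k = z then w k else 0) ≤ U := by
  obtain ⟨S, hScard, hSmin⟩ := exists_min_subset
    (fun z => ∑ k ∈ Finset.range (n - i), if a k = z then w k else 0) i (Nat.le_of_lt hi)
  obtain ⟨b, hagree, hbfeas⟩ := hex
  obtain ⟨b', h1, h2, h3⟩ := complete_in_S n m U i w a hin S hScard hSmin
    (((Finset.Ico (n - i) n).filter (fun k => b k ∉ S)).card) b hagree hbfeas le_rfl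
  exact ⟨S, hScard, hSmin, b', h1, h2, h3⟩
end
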